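/- Let C be a feedforward CRC that stably computes a function f : (ℝ≥0)^k → ℝ≥0. For any input state x, any state z segment-reachable from x, and any rate constants κ : R → ℝ>0, every mass-action trajectory ρ : [0,∞) → (ℝ≥0)^Λ starting at z converges as t → ∞ to an output stable state o with o(Y) = f(x). -/

import Mathlib

open Finset Filter Topology

/-- A chemical reaction network (CRN): a finite set of species indexed by `Fin nS`
and a finite set of reactions indexed by `Fin nR`.  Each reaction `α` is a pair
`(react α, prods α) ∈ ℕ^Λ × ℕ^Λ` of reactant/product stoichiometries with
nonzero reactant vector. -/
structure CRN where
  nS : ℕ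
  nR : ℕ
  react : Fin nR → Fin nS → ℕ
  prods : Fin nR → Fin nS → ℕ
  react_ne_zero : ∀ α, react α ≠ 0

namespace CRN

variable (N : CRN)

/-- The stoichiometry matrix: `M(S,α) = p(S) − r(S)`. -/
def stoich (s : Fin N.nS) (α : Fin N.nR) : ℝ :=
  (N.prods α s : ℝ) - (N.react α s : ℝ)

/-- A state is a vector of nonnegative concentrations. -/
def IsState (c : Fin N.nS → ℝ) : Prop := ∀ s, 0 ≤ c s

/-- `[c]`: the set of species present in `c`. -/
def present (c : Fin N.nS → ℝ) : Set (Fin N.nS) := {s | 0 < c s}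

/-- A reaction `α` is applicable at `c` if `[react α] ⊆ [c]`. -/
def applicable (c : Fin N.nS → ℝ) (α : Fin N.nR) : Prop :=
  ∀ s, 0 < N.react α s → 0 < c s

/-- `c →¹ d`: `d` is straight-line reachable from `c`, i.e. `d = c + M u` for some
nonnegative flux vector `u` whose positive entries correspond to reactions
applicable at `c`. -/
def slReach (c d : Fin N.nS → ℝ) : Prop :=
  N.IsState c ∧ N.IsState d ∧
  ∃ u : Fin N.nR → ℝ, (∀ α, 0 ≤ u α) ∧
    (∀ α, 0 < u α → N.applicable c α) ∧
    ∀ s, d s = c s + ∑ α, u α * N.stoich s α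

/-- `c ⇝^l d`: `d` is `l`-segment reachable from `c`. -/
def segReachN (l : ℕ) (c d : Fin N.nS → ℝ) : Prop :=
  ∃ b : Fin (l + 1) → Fin N.nS → ℝ,
    b 0 = c ∧ b (Fin.last l) = d ∧
    ∀ i : Fin l, N.slReach (b i.castSucc) (b i.succ)

/-- `c ⇝ d`: `d` is segment-reachable from `c`. -/
def segReach (c d : Fin N.nS → ℝ) : Prop := ∃ l, N.segReachN l c d

/-- `P(c)`: the set of species present in some state segment-reachable from `c`. -/
def producible (c : Fin N.nS → ℝ) : Set (Fin N.nS) :=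
  {s | ∃ d, N.segReach c d ∧ 0 < d s}

/-- A siphon: every reaction producing a species of `Ω` has a reactant in `Ω`. -/
def IsSiphon (Ω : Set (Fin N.nS)) : Prop :=
  ∀ α, (∃ s ∈ Ω, 0 < N.prods α s) → ∃ s ∈ Ω, 0 < N.react α s

end CRN
/-- A chemical reaction computer (CRC): a CRN together with `k` distinct input
species `X_1, …, X_k` and an output species `Y` that is not an input species. -/
structure CRC (k : ℕ) extends CRN where
  inputs : Fin k → Fin nS
  out : Fin nS
  inputs_inj : Function.Injective inputs
  out_not_input : ∀ i, inputs i ≠ out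

namespace CRC

variable {k : ℕ} (C : CRC k)

/-- The initial state associated to an input vector `x ∈ (ℝ≥0)^k`:
concentration `x i` of input species `X_i` and `0` of every other species. -/
def inputState (x : Fin k → ℝ) : Fin C.nS → ℝ :=
  fun s => ∑ i, if C.inputs i = s then x i else 0

/-- A state `o` is output stable if no segment-reachable state changes the
concentration of the output species. -/
def outputStable (o : Fin C.nS → ℝ) : Prop :=
  ∀ o', C.toCRN.segReach o o' → o' C.out = o C.out

/-- The CRC stably computes `f : (ℝ≥0)^k → ℝ≥0`. -/
def stablyComputes (f : (Fin k → ℝ) → ℝ) : Prop :=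
  ∀ x : Fin k → ℝ, (∀ i, 0 ≤ x i) →
    ∀ c, C.toCRN.segReach (C.inputState x) c →
      ∃ o, C.toCRN.segReach c o ∧ C.outputStable o ∧ o C.out = f x

end CRC
namespace CRN

/-- The mass-action vector field determined by rate constants `κ`:
`(dc/dt)(S) = Σ_α κ(α)·(∏_{S'} c(S')^{r_α(S')})·(p_α(S) − r_α(S))`. -/
def massActionField (N : CRN) (κ : Fin N.nR → ℝ) (c : Fin N.nS → ℝ) :
    Fin N.nS → ℝ :=
  fun s => ∑ α, κ α * (∏ s', c s' ^ N.react α s') * N.stoich s α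

/-- A mass-action trajectory from `c` with rate constants `κ`: a differentiable
`ρ : [0,∞) → (ℝ≥0)^Λ` with `ρ(0) = c` satisfying the mass-action ODE. -/
def MassActionTraj (N : CRN) (κ : Fin N.nR → ℝ) (c : Fin N.nS → ℝ)
    (ρ : ℝ → Fin N.nS → ℝ) : Prop :=
  ρ 0 = c ∧ (∀ t ∈ Set.Ici (0:ℝ), N.IsState (ρ t)) ∧
    ∀ t ∈ Set.Ici (0:ℝ),
      HasDerivWithinAt ρ (N.massActionField κ (ρ t)) (Set.Ici 0) t

/-- `d` is mass-action reachable from `c`: for some positive rate constants,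
a mass-action trajectory from `c` passes through `d` or tends to `d`. -/
def MassActionReachable (N : CRN) (c d : Fin N.nS → ℝ) : Prop :=
  ∃ κ : Fin N.nR → ℝ, (∀ α, 0 < κ α) ∧
    ∃ ρ : ℝ → Fin N.nS → ℝ, N.MassActionTraj κ c ρ ∧
      ((∃ tf ≥ (0:ℝ), ρ tf = d) ∨ Tendsto ρ atTop (nhds d))

/-- A CRN is feedforward if the species can be ordered so that every reaction
net producing a species net consumes some earlier species. -/
def Feedforward (N : CRN) : Prop :=
  ∃ e : Fin N.nS ≃ Fin N.nS,
    ∀ (α : Fin N.nR) (i : Fin N.nS), 0 < N.stoich (e i) α →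
      ∃ i', i' < i ∧ N.stoich (e i') α < 0

end CRN


namespace CRN

variable {N : CRN}

/-- Segment reachability is the reflexive-transitive closure of straight-line
reachability. -/
theorem segReach_iff_reflTransGen {c d : Fin N.nS → ℝ} :
    N.segReach c d ↔ Relation.ReflTransGen N.slReach c d := by
  constructor
  · rintro ⟨l, hl⟩
    induction l generalizing d with
    | zero =>
      obtain ⟨b, hb0, hbl, -⟩ := hl
      have : c = d := by rw [← hb0, ← hbl]; rfl
      exact this ▸ Relation.ReflTransGen.refl
    | succ l ih =>
      obtain ⟨b, hb0, hbl, hstep⟩ := hl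
      have h1 : Relation.ReflTransGen N.slReach c (b (Fin.last l).castSucc) := by
        refine ih ⟨fun i => b i.castSucc, ?_, rfl, ?_⟩
        · simpa using hb0
        · intro i
          have := hstep i.castSucc
          simpa [Fin.castSucc_lt_last] using this
      refine h1.tail ?_
      have := hstep (Fin.last l)
      rw [Fin.succ_last] at this
      simpa [hbl] using this
  · intro h
    induction h with
    | refl => exact ⟨0, fun _ => c, rfl, rfl, fun i => i.elim0⟩
    | @tail bmid dfin hab hbd ih =>
      obtain ⟨l, b, hb0, hbl, hstep⟩ := ih
      refine ⟨l + 1, Fin.snoc b dfin, ?_, ?_, ?_⟩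
      · rw [show (0 : Fin (l+2)) = Fin.castSucc 0 by rfl, Fin.snoc_castSucc, hb0]
      · rw [Fin.snoc_last]
      · intro i
        refine Fin.lastCases ?_ ?_ i
        · rw [Fin.succ_last, Fin.snoc_last, Fin.snoc_castSucc, hbl]
          exact hbd
        · intro j
          rw [show (j.castSucc : Fin (l+1)).succ = (j.succ : Fin (l+1)).castSucc by
            ext; simp [Fin.val_succ]]
          rw [Fin.snoc_castSucc, Fin.snoc_castSucc]
          exact hstep j


theorem segReach_trans {c d e : Fin N.nS → ℝ} (h1 : N.segReach c d)
    (h2 : N.segReach d e) : N.segReach c e := by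
  rw [segReach_iff_reflTransGen] at *
  exact h1.trans h2

/-- A static state: every reaction with a nonzero stoichiometry column has an
absent reactant. -/
def staticAt (o : Fin N.nS → ℝ) : Prop :=
  ∀ α, (∃ s, N.stoich s α ≠ 0) → ∃ s, 0 < N.react α s ∧ o s = 0

theorem slReach_eq_of_static {o d : Fin N.nS → ℝ} (h : N.staticAt o)
    (hr : N.slReach o d) : d = o := by
  obtain ⟨-, -, u, hu0, happ, heq⟩ := hr
  funext s
  rw [heq s]
  have : ∀ α, u α * N.stoich s α = 0 := by
    intro α
    rcases eq_or_lt_of_le (hu0 α) with h0 | hpos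
    · rw [← h0, zero_mul]
    · by_cases hnull : ∃ s', N.stoich s' α ≠ 0
      · obtain ⟨s', hs', ho'⟩ := h α hnull
        have := happ α hpos s' hs'
        rw [ho'] at this
        exact absurd this (lt_irrefl 0)
      · push_neg at hnull
        rw [hnull s, mul_zero]
  rw [Finset.sum_eq_zero fun α _ => this α, add_zero]

theorem segReach_eq_of_static {o d : Fin N.nS → ℝ} (h : N.staticAt o)
    (hr : N.segReach o d) : d = o := by
  rw [segReach_iff_reflTransGen] at hr
  induction hr with
  | refl => rfl
  | tail hab hbd ih => rw [ih] at hbd; exact slReach_eq_of_static h hbd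


/-! ### Lyapunov weights for feedforward networks -/

/-- A uniform bound on the entries of the stoichiometry matrix. -/
def Bnd (N : CRN) : ℕ :=
  Finset.sup Finset.univ (fun p : Fin N.nR × Fin N.nS => N.react p.1 p.2 + N.prods p.1 p.2)

lemma abs_stoich_le (s : Fin N.nS) (α : Fin N.nR) : |N.stoich s α| ≤ (N.Bnd : ℝ) := by
  have h : N.react α s + N.prods α s ≤ N.Bnd :=
    Finset.le_sup (f := fun p : Fin N.nR × Fin N.nS => N.react p.1 p.2 + N.prods p.1 p.2)
      (Finset.mem_univ (α, s))
  rw [stoich, abs_sub_comm, abs_le]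
  constructor
  · have : (N.react α s : ℝ) + N.prods α s ≤ (N.Bnd : ℝ) := by exact_mod_cast h
    nlinarith [Nat.cast_nonneg (α := ℝ) (N.react α s), Nat.cast_nonneg (α := ℝ) (N.prods α s)]
  · have : (N.react α s : ℝ) + N.prods α s ≤ (N.Bnd : ℝ) := by exact_mod_cast h
    nlinarith [Nat.cast_nonneg (α := ℝ) (N.react α s), Nat.cast_nonneg (α := ℝ) (N.prods α s)]

lemma stoich_le_neg_one {s : Fin N.nS} {α : Fin N.nR} (h : N.stoich s α < 0) :
    N.stoich s α ≤ -1 := by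
  rw [stoich] at *
  have : N.prods α s < N.react α s := by exact_mod_cast sub_neg.mp h
  have : N.prods α s + 1 ≤ N.react α s := this
  have : (N.prods α s : ℝ) + 1 ≤ (N.react α s : ℝ) := by exact_mod_cast this
  linarith

/-- The geometric decay factor used for the Lyapunov weights. -/
noncomputable def eps (N : CRN) : ℝ := 1 / (2 * (N.nS + 1) * (N.Bnd + 1))

lemma eps_pos (N : CRN) : 0 < N.eps := by
  apply div_pos one_pos
  positivity

lemma eps_le_one (N : CRN) : N.eps ≤ 1 := by
  rw [eps, div_le_one (by positivity)]
  nlinarith [Nat.cast_nonneg (α := ℝ) N.nS, Nat.cast_nonneg (α := ℝ) N.Bnd]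

/-- The Lyapunov weights. -/
noncomputable def wt (N : CRN) (i : Fin N.nS) : ℝ := N.eps ^ (i : ℕ)

lemma wt_pos (N : CRN) (i : Fin N.nS) : 0 < N.wt i := pow_pos N.eps_pos _

/-- The uniform strict-decrease constant. -/
noncomputable def lyapC (N : CRN) : ℝ := N.eps ^ N.nS / 2

lemma lyapC_pos (N : CRN) : 0 < N.lyapC := by
  have := N.eps_pos; rw [lyapC]; positivity

section Lyap

variable (e : Fin N.nS ≃ Fin N.nS)
variable (hff : ∀ (α : Fin N.nR) (i : Fin N.nS), 0 < N.stoich (e i) α →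
      ∃ i', i' < i ∧ N.stoich (e i') α < 0)

open Finset in
include hff in
/-- The key Lyapunov inequality for partial sums of weighted stoichiometry. -/
lemma lyap_key (α : Fin N.nR) (n : ℕ) :
    (∑ i ∈ Finset.univ.filter (fun i : Fin N.nS => (i : ℕ) < n),
        N.wt i * N.stoich (e i) α) ≤ 0 ∧
    ((∃ i : Fin N.nS, (i : ℕ) < n ∧ N.stoich (e i) α ≠ 0) →
      (∑ i ∈ Finset.univ.filter (fun i : Fin N.nS => (i : ℕ) < n),
        N.wt i * N.stoich (e i) α) ≤ -N.lyapC) := by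
  classical
  set S := Finset.univ.filter (fun i : Fin N.nS => (i : ℕ) < n) with hS
  by_cases hz : ∀ i ∈ S, N.stoich (e i) α = 0
  · have h0 : (∑ i ∈ S, N.wt i * N.stoich (e i) α) = 0 :=
      Finset.sum_eq_zero fun i hi => by rw [hz i hi, mul_zero]
    refine ⟨le_of_eq h0, fun ⟨i, hin, hne⟩ => absurd (hz i ?_) hne⟩
    exact Finset.mem_filter.mpr ⟨Finset.mem_univ _, hin⟩
  · push_neg at hz
    set T := S.filter (fun i => N.stoich (e i) α ≠ 0) with hT
    have hTne : T.Nonempty := by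
      obtain ⟨i, hi, hne⟩ := hz
      exact ⟨i, Finset.mem_filter.mpr ⟨hi, hne⟩⟩
    set i0 := T.min' hTne with hi0
    have hi0T : i0 ∈ T := T.min'_mem hTne
    have hi0S : i0 ∈ S := (Finset.mem_filter.mp hi0T).1
    have hi0n : (i0 : ℕ) < n := (Finset.mem_filter.mp hi0S).2
    have hi0ne : N.stoich (e i0) α ≠ 0 := (Finset.mem_filter.mp hi0T).2
    have hmin : ∀ i : Fin N.nS, i < i0 → N.stoich (e i) α = 0 := by
      intro i hi
      by_contra hne
      have hiS : i ∈ S := Finset.mem_filter.mpr ⟨Finset.mem_univ _,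
        lt_trans (Fin.lt_iff_val_lt_val.mp hi) hi0n⟩
      have : i ∈ T := Finset.mem_filter.mpr ⟨hiS, hne⟩
      exact absurd (T.min'_le i this) (not_le.mpr hi)
    have hneg : N.stoich (e i0) α < 0 := by
      rcases lt_trichotomy (N.stoich (e i0) α) 0 with h | h | h
      · exact h
      · exact absurd h hi0ne
      · obtain ⟨i', hi', hneg'⟩ := hff α i0 h
        exact absurd (hmin i' hi') (ne_of_lt hneg')
    have hle := N.stoich_le_neg_one hneg
    -- main estimate
    have key : (∑ i ∈ S, N.wt i * N.stoich (e i) α) ≤ -N.lyapC := by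
      rw [← Finset.add_sum_erase S _ hi0S]
      have h1 : N.wt i0 * N.stoich (e i0) α ≤ -N.eps ^ (i0 : ℕ) := by
        have := N.wt_pos i0
        calc N.wt i0 * N.stoich (e i0) α ≤ N.wt i0 * (-1) := by
              exact mul_le_mul_of_nonneg_left hle (le_of_lt this)
          _ = -N.eps ^ (i0 : ℕ) := by rw [wt]; ring
      have h2 : (∑ i ∈ S.erase i0, N.wt i * N.stoich (e i) α) ≤
          (N.nS : ℝ) * (N.eps ^ ((i0 : ℕ) + 1) * (N.Bnd : ℝ)) := by
        have hcard : (S.erase i0).card ≤ N.nS := by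
          calc (S.erase i0).card ≤ S.card := Finset.card_erase_le
            _ ≤ (Finset.univ : Finset (Fin N.nS)).card := Finset.card_le_card (Finset.filter_subset _ _)
            _ = N.nS := Finset.card_univ.trans (Fintype.card_fin _)
        calc (∑ i ∈ S.erase i0, N.wt i * N.stoich (e i) α)
            ≤ ∑ _i ∈ S.erase i0, N.eps ^ ((i0 : ℕ) + 1) * (N.Bnd : ℝ) := by
              apply Finset.sum_le_sum
              intro i hi
              rcases lt_or_ge i i0 with hlt | hge
              · rw [hmin i hlt, mul_zero]
                have := N.eps_pos
                positivity
              · have hne : i ≠ i0 := Finset.ne_of_mem_erase hi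
                have hgt : i0 < i := lt_of_le_of_ne hge (Ne.symm hne)
                have : (i0 : ℕ) + 1 ≤ (i : ℕ) := Fin.lt_iff_val_lt_val.mp hgt
                calc N.wt i * N.stoich (e i) α ≤ |N.wt i * N.stoich (e i) α| := le_abs_self _
                  _ = N.wt i * |N.stoich (e i) α| := by
                      rw [abs_mul, abs_of_pos (N.wt_pos i)]
                  _ ≤ N.wt i * (N.Bnd : ℝ) := by
                      exact mul_le_mul_of_nonneg_left (N.abs_stoich_le _ _) (le_of_lt (N.wt_pos i))
                  _ ≤ N.eps ^ ((i0 : ℕ) + 1) * (N.Bnd : ℝ) := by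
                      apply mul_le_mul_of_nonneg_right _ (Nat.cast_nonneg _)
                      rw [wt]
                      exact pow_le_pow_of_le_one (le_of_lt N.eps_pos) N.eps_le_one this
          _ = (S.erase i0).card * (N.eps ^ ((i0 : ℕ) + 1) * (N.Bnd : ℝ)) := by
              rw [Finset.sum_const, nsmul_eq_mul]
          _ ≤ (N.nS : ℝ) * (N.eps ^ ((i0 : ℕ) + 1) * (N.Bnd : ℝ)) := by
              have := N.eps_pos
              apply mul_le_mul_of_nonneg_right _ (by positivity)
              exact_mod_cast hcard
      have h3 : (N.nS : ℝ) * (N.eps ^ ((i0 : ℕ) + 1) * (N.Bnd : ℝ)) ≤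
          N.eps ^ (i0 : ℕ) / 2 := by
        have hε := N.eps_pos
        rw [pow_succ]
        have : (N.nS : ℝ) * (N.Bnd : ℝ) * N.eps ≤ 1 / 2 := by
          rw [eps]
          rw [mul_one_div, div_le_div_iff₀ (by positivity) (by norm_num)]
          nlinarith [Nat.cast_nonneg (α := ℝ) N.nS, Nat.cast_nonneg (α := ℝ) N.Bnd]
        calc (N.nS : ℝ) * (N.eps ^ (i0 : ℕ) * N.eps * (N.Bnd : ℝ))
            = N.eps ^ (i0 : ℕ) * ((N.nS : ℝ) * (N.Bnd : ℝ) * N.eps) := by ring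
          _ ≤ N.eps ^ (i0 : ℕ) * (1 / 2) := by
              exact mul_le_mul_of_nonneg_left this (by positivity)
          _ = N.eps ^ (i0 : ℕ) / 2 := by ring
      have h4 : N.eps ^ (i0 : ℕ) / 2 - N.eps ^ (i0 : ℕ) ≤ -N.lyapC := by
        rw [lyapC]
        have : N.eps ^ N.nS ≤ N.eps ^ (i0 : ℕ) :=
          pow_le_pow_of_le_one (le_of_lt N.eps_pos) N.eps_le_one (le_of_lt i0.isLt)
        linarith
      linarith
    refine ⟨le_trans key ?_, fun _ => key⟩
    have := N.lyapC_pos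
    linarith

end Lyap


/-! ### One-sided calculus helpers -/

section Helpers

open Set

lemma antitone_of_right_deriv {f f' : ℝ → ℝ} {a b : ℝ} (hab : a ≤ b)
    (hc : ContinuousOn f (Icc a b))
    (hd : ∀ x ∈ Ico a b, HasDerivWithinAt f (f' x) (Ici x) x)
    (h0 : ∀ x ∈ Ico a b, f' x ≤ 0) : f b ≤ f a := by
  have := image_le_of_deriv_right_le_deriv_boundary (B := fun _ => f a) (B' := fun _ => 0)
    hc hd le_rfl continuousOn_const (fun x _ => hasDerivWithinAt_const x _ _) h0
    (right_mem_Icc.mpr hab)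
  simpa using this

lemma monotone_of_right_deriv {f f' : ℝ → ℝ} {a b : ℝ} (hab : a ≤ b)
    (hc : ContinuousOn f (Icc a b))
    (hd : ∀ x ∈ Ico a b, HasDerivWithinAt f (f' x) (Ici x) x)
    (h0 : ∀ x ∈ Ico a b, 0 ≤ f' x) : f a ≤ f b := by
  have := antitone_of_right_deriv (f := fun t => -f t) (f' := fun t => -(f' t)) hab
    (hc.neg) (fun x hx => (hd x hx).neg) (fun x hx => neg_nonpos.mpr (h0 x hx))
  linarith

end Helpers

/-- A reaction is nonnull if its stoichiometry column is nonzero. -/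
def nonnul (N : CRN) (α : Fin N.nR) : Prop := ∃ s, N.stoich s α ≠ 0

/-- The mass-action rate of reaction `α` in state `c`. -/
def rate (N : CRN) (κ : Fin N.nR → ℝ) (c : Fin N.nS → ℝ) (α : Fin N.nR) : ℝ :=
  κ α * ∏ s', c s' ^ N.react α s'

lemma field_eq (κ : Fin N.nR → ℝ) (c : Fin N.nS → ℝ) (s : Fin N.nS) :
    N.massActionField κ c s = ∑ α, N.rate κ c α * N.stoich s α := rfl

lemma rate_nonneg {κ : Fin N.nR → ℝ} (hκ : ∀ α, 0 < κ α) {c : Fin N.nS → ℝ}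
    (hc : N.IsState c) (α : Fin N.nR) : 0 ≤ N.rate κ c α := by
  apply mul_nonneg (le_of_lt (hκ α))
  exact Finset.prod_nonneg fun s _ => pow_nonneg (hc s) _

lemma rate_pos_iff {κ : Fin N.nR → ℝ} (hκ : ∀ α, 0 < κ α) {c : Fin N.nS → ℝ}
    (hc : N.IsState c) (α : Fin N.nR) :
    0 < N.rate κ c α ↔ N.applicable c α := by
  constructor
  · intro h s hs
    rcases lt_or_eq_of_le (hc s) with h' | h'
    · exact h'
    · exfalso
      have : (∏ s', c s' ^ N.react α s') = 0 := by
        apply Finset.prod_eq_zero (Finset.mem_univ s)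
        rw [← h', zero_pow (by omega)]
      rw [rate, this, mul_zero] at h
      exact lt_irrefl 0 h
  · intro h
    apply mul_pos (hκ α)
    apply Finset.prod_pos
    intro s _
    rcases Nat.eq_zero_or_pos (N.react α s) with h' | h'
    · rw [h', pow_zero]; exact one_pos
    · exact pow_pos (h s h') _

lemma rate_continuous (κ : Fin N.nR → ℝ) (α : Fin N.nR) :
    Continuous fun c : Fin N.nS → ℝ => N.rate κ c α := by
  unfold rate
  fun_prop

/-- If `s''` appears as a reactant of `α`, the rate of `α` is bounded by
`c s''` times a product bound. -/
lemma prod_pow_le {c : Fin N.nS → ℝ} (hc : N.IsState c) {α : Fin N.nR} {s'' : Fin N.nS}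
    (hr : 1 ≤ N.react α s'') :
    (∏ s', c s' ^ N.react α s') ≤ c s'' * ∏ s', (c s' + 1) ^ N.react α s' := by
  rw [← Finset.mul_prod_erase Finset.univ _ (Finset.mem_univ s''),
      ← Finset.mul_prod_erase Finset.univ (fun s' => (c s' + 1) ^ N.react α s')
        (Finset.mem_univ s'')]
  have h1 : c s'' ^ N.react α s'' ≤ c s'' * (c s'' + 1) ^ N.react α s'' := by
    calc c s'' ^ N.react α s'' = c s'' * c s'' ^ (N.react α s'' - 1) := by
          rw [← pow_succ']
          congr 1
          omega
      _ ≤ c s'' * (c s'' + 1) ^ N.react α s'' := by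
          apply mul_le_mul_of_nonneg_left _ (hc s'')
          calc c s'' ^ (N.react α s'' - 1) ≤ (c s'' + 1) ^ (N.react α s'' - 1) :=
                pow_le_pow_left₀ (hc s'') (by linarith [hc s'']) _
            _ ≤ (c s'' + 1) ^ N.react α s'' :=
                pow_le_pow_right₀ (by linarith [hc s'']) (by omega)
  calc c s'' ^ N.react α s'' * ∏ s' ∈ Finset.univ.erase s'', c s' ^ N.react α s'
      ≤ (c s'' * (c s'' + 1) ^ N.react α s'') *
        ∏ s' ∈ Finset.univ.erase s'', (c s' + 1) ^ N.react α s' := by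
        apply mul_le_mul h1
        · apply Finset.prod_le_prod
          · intro i _; exact pow_nonneg (hc i) _
          · intro i _; exact pow_le_pow_left₀ (hc i) (by linarith [hc i]) _
        · exact Finset.prod_nonneg fun i _ => pow_nonneg (hc i) _
        · apply mul_nonneg (hc s'')
          exact pow_nonneg (by linarith [hc s'']) _
    _ = c s'' * ((c s'' + 1) ^ N.react α s'' *
        ∏ s' ∈ Finset.univ.erase s'', (c s' + 1) ^ N.react α s') := by ring

/-- Bounding function for perturbation estimates. -/
noncomputable def Qb (N : CRN) (κ : Fin N.nR → ℝ) (c : Fin N.nS → ℝ) : ℝ :=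
  ∑ α, κ α * ((N.Bnd : ℝ) + 1) * ∏ s', (c s' + 1) ^ N.react α s'

lemma Qb_nonneg {κ : Fin N.nR → ℝ} (hκ : ∀ α, 0 < κ α) {c : Fin N.nS → ℝ}
    (hc : N.IsState c) : 0 ≤ N.Qb κ c := by
  apply Finset.sum_nonneg
  intro α _
  apply mul_nonneg (mul_nonneg (le_of_lt (hκ α)) (by positivity))
  exact Finset.prod_nonneg fun s _ => pow_nonneg (by linarith [hc s]) _

lemma Qb_continuous (κ : Fin N.nR → ℝ) :
    Continuous fun c : Fin N.nS → ℝ => N.Qb κ c := by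
  unfold Qb
  fun_prop

/-- The mass-action field is bounded below by `-(Qb) * c s`. -/
lemma field_lower_bound {κ : Fin N.nR → ℝ} (hκ : ∀ α, 0 < κ α) {c : Fin N.nS → ℝ}
    (hc : N.IsState c) (s : Fin N.nS) :
    -(N.Qb κ c * c s) ≤ N.massActionField κ c s := by
  rw [field_eq, Qb, Finset.sum_mul, ← Finset.sum_neg_distrib]
  apply Finset.sum_le_sum
  intro α _
  rcases le_or_gt 0 (N.stoich s α) with hst | hst
  · have h1 : 0 ≤ N.rate κ c α * N.stoich s α :=
      mul_nonneg (N.rate_nonneg hκ hc α) hst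
    have h2 : 0 ≤ κ α * ((N.Bnd : ℝ) + 1) * (∏ s', (c s' + 1) ^ N.react α s') * c s := by
      apply mul_nonneg _ (hc s)
      apply mul_nonneg (mul_nonneg (le_of_lt (hκ α)) (by positivity))
      exact Finset.prod_nonneg fun i _ => pow_nonneg (by linarith [hc i]) _
    linarith
  · have hre : 1 ≤ N.react α s := by
      by_contra h
      have : N.react α s = 0 := by omega
      rw [stoich, this] at hst
      simp at hst
      linarith [Nat.cast_nonneg (α := ℝ) (N.prods α s)]
    have hprod := N.prod_pow_le hc (α := α) hre
    have habs : -N.stoich s α ≤ (N.Bnd : ℝ) + 1 := by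
      have := N.abs_stoich_le s α
      rw [abs_le] at this
      linarith [this.1]
    have hrate : 0 ≤ ∏ s', c s' ^ N.react α s' :=
      Finset.prod_nonneg fun i _ => pow_nonneg (hc i) _
    have hprodpos : 0 ≤ ∏ s', (c s' + 1) ^ N.react α s' :=
      Finset.prod_nonneg fun i _ => pow_nonneg (by linarith [hc i]) _
    rw [rate]
    calc -(κ α * ((N.Bnd : ℝ) + 1) * (∏ s', (c s' + 1) ^ N.react α s') * c s)
        ≤ -(κ α * (-N.stoich s α) * (∏ s', c s' ^ N.react α s')) := by
          rw [neg_le_neg_iff]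
          calc κ α * (-N.stoich s α) * (∏ s', c s' ^ N.react α s')
              ≤ κ α * ((N.Bnd : ℝ) + 1) * (∏ s', c s' ^ N.react α s') := by
                apply mul_le_mul_of_nonneg_right _ hrate
                exact mul_le_mul_of_nonneg_left habs (le_of_lt (hκ α))
            _ ≤ κ α * ((N.Bnd : ℝ) + 1) * (c s * ∏ s', (c s' + 1) ^ N.react α s') := by
                apply mul_le_mul_of_nonneg_left hprod
                exact mul_nonneg (le_of_lt (hκ α)) (by positivity)
            _ = κ α * ((N.Bnd : ℝ) + 1) * (∏ s', (c s' + 1) ^ N.react α s') * c s := by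
                ring
      _ = κ α * (∏ s', c s' ^ N.react α s') * N.stoich s α := by ring


/-! ### Basic trajectory facts -/

open Set

section Traj

variable {κ : Fin N.nR → ℝ} {z : Fin N.nS → ℝ} {ρ : ℝ → Fin N.nS → ℝ}

lemma traj_state (hρ : N.MassActionTraj κ z ρ) {t : ℝ} (ht : 0 ≤ t) :
    N.IsState (ρ t) := hρ.2.1 t ht

lemma traj_coord_deriv (hρ : N.MassActionTraj κ z ρ) (s : Fin N.nS) {t : ℝ} (ht : 0 ≤ t) :
    HasDerivWithinAt (fun u => ρ u s) (N.massActionField κ (ρ t) s) (Ici 0) t :=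
  hasDerivWithinAt_pi.mp (hρ.2.2 t ht) s

lemma traj_coord_contOn (hρ : N.MassActionTraj κ z ρ) (s : Fin N.nS) :
    ContinuousOn (fun u => ρ u s) (Ici 0) :=
  fun t ht => (traj_coord_deriv hρ s ht).continuousWithinAt

lemma traj_contOn (hρ : N.MassActionTraj κ z ρ) : ContinuousOn ρ (Ici 0) := by
  apply continuousOn_pi.mpr
  exact fun s => traj_coord_contOn hρ s

lemma traj_cont_max (hρ : N.MassActionTraj κ z ρ) :
    Continuous (fun t => ρ (max t 0)) := by
  apply (traj_contOn hρ).comp_continuous (continuous_id.max continuous_const)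
  intro t
  exact le_max_right t 0

/-- If a species is absent, applicable reactions producing it make the field positive. -/
lemma field_pos_aux {κ : Fin N.nR → ℝ} (hκ : ∀ α, 0 < κ α) {c : Fin N.nS → ℝ}
    (hc : N.IsState c) {s : Fin N.nS} (hcs : c s = 0) {α₀ : Fin N.nR}
    (happ : N.applicable c α₀) (hst : 0 < N.stoich s α₀) :
    0 < N.massActionField κ c s := by
  rw [field_eq]
  have hterm : ∀ α ∈ Finset.univ, 0 ≤ N.rate κ c α * N.stoich s α := by
    intro α _
    rcases le_or_gt 0 (N.stoich s α) with h | h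
    · exact mul_nonneg (N.rate_nonneg hκ hc α) h
    · have hre : 1 ≤ N.react α s := by
        by_contra hre
        have h0 : N.react α s = 0 := by omega
        rw [stoich, h0] at h
        simp at h
        linarith [Nat.cast_nonneg (α := ℝ) (N.prods α s)]
      have : N.rate κ c α = 0 := by
        rw [rate]
        have : (∏ s', c s' ^ N.react α s') = 0 := by
          apply Finset.prod_eq_zero (Finset.mem_univ s)
          rw [hcs, zero_pow (by omega)]
        rw [this, mul_zero]
      rw [this, zero_mul]
  have hα₀ : 0 < N.rate κ c α₀ * N.stoich s α₀ :=
    mul_pos ((N.rate_pos_iff hκ hc α₀).mpr happ) hst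
  calc (0:ℝ) < N.rate κ c α₀ * N.stoich s α₀ := hα₀
    _ ≤ ∑ α, N.rate κ c α * N.stoich s α :=
        Finset.single_le_sum hterm (Finset.mem_univ α₀)

/-- Positivity persists along mass-action trajectories. -/
lemma traj_persist (hκ : ∀ α, 0 < κ α) (hρ : N.MassActionTraj κ z ρ) (s : Fin N.nS)
    {t0 t : ℝ} (h0 : 0 ≤ t0) (ht : t0 ≤ t) (hpos : 0 < ρ t0 s) : 0 < ρ t s := by
  -- bound the perturbation coefficient on [t0, t]
  set Q : ℝ → ℝ := fun u => N.Qb κ (ρ (max u 0)) with hQ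
  have hQcont : Continuous Q := (N.Qb_continuous κ).comp (traj_cont_max hρ)
  obtain ⟨x0, hx0, hmax⟩ := isCompact_Icc.exists_isMaxOn (Set.nonempty_Icc.mpr ht)
    hQcont.continuousOn
  set K := Q x0 with hK
  have hKQ : ∀ u ∈ Icc t0 t, Q u ≤ K := fun u hu => hmax hu
  set y : ℝ → ℝ := fun u => ρ u s * Real.exp (K * u) with hy
  have hycont : ContinuousOn y (Icc t0 t) := by
    apply ContinuousOn.mul
    · exact (traj_coord_contOn hρ s).mono (fun u hu => le_trans h0 hu.1)
    · exact (Real.continuous_exp.comp (continuous_const.mul continuous_id)).continuousOn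
  have hyderiv : ∀ u ∈ Ico t0 t,
      HasDerivWithinAt y
        (N.massActionField κ (ρ u) s * Real.exp (K * u) +
          ρ u s * (K * Real.exp (K * u))) (Ici u) u := by
    intro u hu
    have hu0 : (0:ℝ) ≤ u := le_trans h0 hu.1
    have h1 : HasDerivWithinAt (fun v => ρ v s) (N.massActionField κ (ρ u) s) (Ici u) u :=
      (traj_coord_deriv hρ s hu0).mono (Ici_subset_Ici.mpr hu0)
    have h2 : HasDerivAt (fun v : ℝ => Real.exp (K * v)) (K * Real.exp (K * u)) u := by
      have h3 := (Real.hasDerivAt_exp (K * u)).comp u ((hasDerivAt_id u).const_mul K)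
      have : (fun v : ℝ => Real.exp (K * v)) = Real.exp ∘ fun v : ℝ => K * v := rfl
      rw [this]
      exact h3.congr_deriv (by ring)
    exact h1.mul (h2.hasDerivWithinAt)
  have hynn : ∀ u ∈ Ico t0 t, 0 ≤ N.massActionField κ (ρ u) s * Real.exp (K * u) +
      ρ u s * (K * Real.exp (K * u)) := by
    intro u hu
    have hu0 : (0:ℝ) ≤ u := le_trans h0 hu.1
    have hstate := traj_state hρ hu0
    have hfb := N.field_lower_bound hκ hstate s
    have hQu : Q u = N.Qb κ (ρ u) := by rw [hQ]; simp [max_eq_left hu0]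
    have hQK : N.Qb κ (ρ u) ≤ K := by rw [← hQu]; exact hKQ u ⟨hu.1, le_of_lt hu.2⟩
    have hexp : 0 < Real.exp (K * u) := Real.exp_pos _
    have : -(K * ρ u s) ≤ N.massActionField κ (ρ u) s := by
      apply le_trans _ hfb
      rw [neg_le_neg_iff]
      exact mul_le_mul_of_nonneg_right hQK (hstate s)
    calc (0:ℝ) = (-(K * ρ u s) + K * ρ u s) * Real.exp (K * u) := by ring
      _ ≤ (N.massActionField κ (ρ u) s + K * ρ u s) * Real.exp (K * u) := by
          apply mul_le_mul_of_nonneg_right _ (le_of_lt hexp)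
          linarith
      _ = N.massActionField κ (ρ u) s * Real.exp (K * u) + ρ u s * (K * Real.exp (K * u)) := by
          ring
  have := monotone_of_right_deriv ht hycont hyderiv hynn
  have hyt0 : 0 < y t0 := mul_pos hpos (Real.exp_pos _)
  have hyt : 0 < y t := lt_of_lt_of_le hyt0 this
  rw [hy] at hyt
  simp only at hyt
  by_contra hns
  push_neg at hns
  have : ρ t s = 0 := le_antisymm hns (traj_state hρ (le_trans h0 ht) s)
  rw [this, zero_mul] at hyt
  exact lt_irrefl 0 hyt

/-- If a producing reaction is applicable forever, the species eventually appears. -/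
lemma traj_becomes_pos (hκ : ∀ α, 0 < κ α) (hρ : N.MassActionTraj κ z ρ)
    {s : Fin N.nS} {α₀ : Fin N.nR} {t0 : ℝ} (h0 : 0 ≤ t0)
    (hst : 0 < N.stoich s α₀)
    (happ : ∀ t, t0 ≤ t → N.applicable (ρ t) α₀) :
    ∃ t1, t0 ≤ t1 ∧ 0 < ρ t1 s := by
  by_contra hcon
  push_neg at hcon
  have hzero : ∀ t, t0 ≤ t → ρ t s = 0 := fun t ht =>
    le_antisymm (hcon t ht) (traj_state hρ (le_trans h0 ht) s)
  have h1 : HasDerivWithinAt (fun u => ρ u s) (N.massActionField κ (ρ t0) s) (Ici t0) t0 :=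
    (traj_coord_deriv hρ s h0).mono (Ici_subset_Ici.mpr h0)
  have h2 : HasDerivWithinAt (fun _ : ℝ => (0:ℝ)) (N.massActionField κ (ρ t0) s) (Ici t0) t0 := by
    apply h1.congr
    · intro u hu; exact (hzero u hu).symm
    · exact (hzero t0 le_rfl).symm
  have h3 : HasDerivWithinAt (fun _ : ℝ => (0:ℝ)) 0 (Ici t0) t0 :=
    hasDerivWithinAt_const t0 _ 0
  have huniq : UniqueDiffWithinAt ℝ (Ici t0) t0 :=
    uniqueDiffOn_Ici t0 t0 Set.self_mem_Ici
  have : N.massActionField κ (ρ t0) s = 0 := by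
    have e1 := h2.derivWithin huniq
    have e2 := h3.derivWithin huniq
    rw [e1] at e2
    exact e2.symm ▸ rfl
  have hpos := N.field_pos_aux hκ (traj_state hρ h0) (hzero t0 le_rfl) (happ t0 le_rfl) hst
  rw [this] at hpos
  exact lt_irrefl 0 hpos

end Traj


/-! ### Lyapunov functions along trajectories, convergence, and total fluxes -/

/-- Weighted partial sums of concentrations along the feedforward order. -/
noncomputable def FSum (N : CRN) (e : Fin N.nS ≃ Fin N.nS) (ρ : ℝ → Fin N.nS → ℝ)
    (n : ℕ) (t : ℝ) : ℝ :=
  ∑ i ∈ Finset.univ.filter (fun i : Fin N.nS => (i : ℕ) < n), N.wt i * ρ t (e i)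

/-- The cumulative flux of reaction `α` up to time `T`. -/
noncomputable def psi (N : CRN) (κ : Fin N.nR → ℝ) (ρ : ℝ → Fin N.nS → ℝ)
    (α : Fin N.nR) (T : ℝ) : ℝ :=
  ∫ t in (0:ℝ)..T, N.rate κ (ρ (max t 0)) α

/-- The total flux of reaction `α` (zero for null reactions). -/
noncomputable def utot (N : CRN) (κ : Fin N.nR → ℝ) (ρ : ℝ → Fin N.nS → ℝ)
    (α : Fin N.nR) : ℝ :=
  open scoped Classical in
  if N.nonnul α then ⨆ T : ℝ, N.psi κ ρ α (max T 0) else 0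

section Lyap2

variable {κ : Fin N.nR → ℝ} {z : Fin N.nS → ℝ} {ρ : ℝ → Fin N.nS → ℝ}
variable {e : Fin N.nS ≃ Fin N.nS}

lemma FSum_deriv (hρ : N.MassActionTraj κ z ρ) (n : ℕ) {t : ℝ} (ht : 0 ≤ t) :
    HasDerivWithinAt (N.FSum e ρ n)
      (∑ α, N.rate κ (ρ t) α *
        (∑ i ∈ Finset.univ.filter (fun i : Fin N.nS => (i : ℕ) < n),
          N.wt i * N.stoich (e i) α)) (Set.Ici 0) t := by
  have h1 : HasDerivWithinAt (N.FSum e ρ n)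
      (∑ i ∈ Finset.univ.filter (fun i : Fin N.nS => (i : ℕ) < n),
        N.wt i * N.massActionField κ (ρ t) (e i)) (Set.Ici 0) t := by
    apply HasDerivWithinAt.fun_sum
    intro i _
    exact (traj_coord_deriv hρ (e i) ht).const_mul (N.wt i)
  convert h1 using 1
  simp only [field_eq, Finset.mul_sum]
  rw [Finset.sum_comm]
  apply Finset.sum_congr rfl
  intro i _
  apply Finset.sum_congr rfl
  intro α _
  ring

lemma FSum_nonneg (hρ : N.MassActionTraj κ z ρ) (n : ℕ) {t : ℝ} (ht : 0 ≤ t) :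
    0 ≤ N.FSum e ρ n t := by
  apply Finset.sum_nonneg
  intro i _
  exact mul_nonneg (le_of_lt (N.wt_pos i)) (traj_state hρ ht (e i))

lemma FSum_contOn (hρ : N.MassActionTraj κ z ρ) (n : ℕ) :
    ContinuousOn (N.FSum e ρ n) (Set.Ici 0) := by
  apply continuousOn_finset_sum
  intro i _
  exact (continuousOn_const.mul (traj_coord_contOn hρ (e i)))

variable (hff : ∀ (α : Fin N.nR) (i : Fin N.nS), 0 < N.stoich (e i) α →
      ∃ i', i' < i ∧ N.stoich (e i') α < 0)

include hff in
lemma FSum_antitone (hκ : ∀ α, 0 < κ α) (hρ : N.MassActionTraj κ z ρ) (n : ℕ)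
    {a b : ℝ} (ha : 0 ≤ a) (hab : a ≤ b) : N.FSum e ρ n b ≤ N.FSum e ρ n a := by
  apply antitone_of_right_deriv hab
    ((FSum_contOn hρ n).mono (fun u hu => le_trans ha hu.1))
    (fun x hx => (FSum_deriv hρ n (le_trans ha hx.1)).mono
      (Set.Ici_subset_Ici.mpr (le_trans ha hx.1)))
  intro x hx
  apply Finset.sum_nonpos
  intro α _
  have h1 := (N.lyap_key e hff α n).1
  have h2 := N.rate_nonneg hκ (traj_state hρ (le_trans ha hx.1)) α
  exact mul_nonpos_of_nonneg_of_nonpos h2 h1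

include hff in
lemma FSum_tendsto (hκ : ∀ α, 0 < κ α) (hρ : N.MassActionTraj κ z ρ) (n : ℕ) :
    ∃ L, Filter.Tendsto (N.FSum e ρ n) Filter.atTop (nhds L) := by
  set g : ℝ → ℝ := fun t => N.FSum e ρ n (max t 0) with hg
  have hganti : Antitone g := by
    intro t1 t2 h12
    exact FSum_antitone hff hκ hρ n (le_max_right t1 0) (max_le_max h12 le_rfl)
  have hgbdd : BddBelow (Set.range g) := by
    refine ⟨0, ?_⟩
    rintro y ⟨t, rfl⟩
    exact FSum_nonneg hρ n (le_max_right t 0)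
  refine ⟨⨅ t, g t, ?_⟩
  have := tendsto_atTop_ciInf hganti hgbdd
  apply this.congr'
  filter_upwards [Filter.eventually_ge_atTop (0:ℝ)] with t ht
  rw [hg]
  simp [max_eq_left ht]

lemma FSum_succ (e : Fin N.nS ≃ Fin N.nS) (ρ : ℝ → Fin N.nS → ℝ) (j : Fin N.nS) (t : ℝ) :
    N.FSum e ρ ((j : ℕ) + 1) t = N.wt j * ρ t (e j) + N.FSum e ρ (j : ℕ) t := by
  rw [FSum, FSum]
  have hset : Finset.univ.filter (fun i : Fin N.nS => (i : ℕ) < (j : ℕ) + 1) =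
      insert j (Finset.univ.filter (fun i : Fin N.nS => (i : ℕ) < (j : ℕ))) := by
    ext i
    simp only [Finset.mem_filter, Finset.mem_univ, true_and, Finset.mem_insert]
    constructor
    · intro h
      rcases Nat.lt_succ_iff_lt_or_eq.mp h with h | h
      · exact Or.inr h
      · exact Or.inl (Fin.ext h)
    · rintro (rfl | h)
      · exact Nat.lt_succ_self _
      · exact Nat.lt_succ_of_lt h
  rw [hset, Finset.sum_insert (by simp)]

include hff in
/-- Mass-action trajectories of feedforward networks converge. -/
lemma traj_tendsto_limit (hκ : ∀ α, 0 < κ α) (hρ : N.MassActionTraj κ z ρ) :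
    ∃ o : Fin N.nS → ℝ, Filter.Tendsto ρ Filter.atTop (nhds o) ∧ N.IsState o := by
  have H : ∀ n : ℕ, ∃ L, Filter.Tendsto (N.FSum e ρ n) Filter.atTop (nhds L) :=
    fun n => FSum_tendsto hff hκ hρ n
  choose L hL using H
  set o : Fin N.nS → ℝ :=
    fun s => (L ((e.symm s : ℕ) + 1) - L (e.symm s)) / N.wt (e.symm s) with ho
  have hcoord : ∀ j : Fin N.nS, Filter.Tendsto (fun t => ρ t (e j)) Filter.atTop
      (nhds ((L ((j : ℕ) + 1) - L (j : ℕ)) / N.wt j)) := by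
    intro j
    have h1 : Filter.Tendsto (fun t => (N.FSum e ρ ((j : ℕ) + 1) t - N.FSum e ρ (j : ℕ) t)
        / N.wt j) Filter.atTop (nhds ((L ((j : ℕ) + 1) - L (j : ℕ)) / N.wt j)) :=
      ((hL ((j : ℕ) + 1)).sub (hL (j : ℕ))).div_const _
    apply h1.congr
    intro t
    rw [FSum_succ, add_sub_cancel_right, mul_comm, mul_div_assoc,
      div_self (ne_of_gt (N.wt_pos j)), mul_one]
  have hT : Filter.Tendsto ρ Filter.atTop (nhds o) := by
    rw [tendsto_pi_nhds]
    intro s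
    have := hcoord (e.symm s)
    rw [Equiv.apply_symm_apply] at this
    exact this
  refine ⟨o, hT, ?_⟩
  intro s
  have := tendsto_pi_nhds.mp hT s
  apply ge_of_tendsto this
  filter_upwards [Filter.eventually_ge_atTop (0:ℝ)] with t ht
  exact traj_state hρ ht s

lemma psi_integrand_cont (hρ : N.MassActionTraj κ z ρ) (α : Fin N.nR) :
    Continuous (fun t => N.rate κ (ρ (max t 0)) α) :=
  (N.rate_continuous κ α).comp (traj_cont_max hρ)

lemma psi_hasDerivAt (hρ : N.MassActionTraj κ z ρ) (α : Fin N.nR) (b : ℝ) :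
    HasDerivAt (N.psi κ ρ α) (N.rate κ (ρ (max b 0)) α) b :=
  ((psi_integrand_cont hρ α).integral_hasStrictDerivAt 0 b).hasDerivAt

lemma psi_zero (α : Fin N.nR) : N.psi κ ρ α 0 = 0 :=
  intervalIntegral.integral_same

lemma psi_cont (hρ : N.MassActionTraj κ z ρ) (α : Fin N.nR) : Continuous (N.psi κ ρ α) :=
  continuous_iff_continuousAt.mpr fun b => (psi_hasDerivAt hρ α b).continuousAt

lemma psi_mono (hκ : ∀ α, 0 < κ α) (hρ : N.MassActionTraj κ z ρ) (α : Fin N.nR)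
    {a b : ℝ} (hab : a ≤ b) : N.psi κ ρ α a ≤ N.psi κ ρ α b := by
  apply monotone_of_right_deriv hab (psi_cont hρ α).continuousOn
    (fun x _ => (psi_hasDerivAt hρ α x).hasDerivWithinAt)
  intro x _
  exact N.rate_nonneg hκ (traj_state hρ (le_max_right x 0)) α

lemma psi_nonneg (hκ : ∀ α, 0 < κ α) (hρ : N.MassActionTraj κ z ρ) (α : Fin N.nR)
    {T : ℝ} (hT : 0 ≤ T) : 0 ≤ N.psi κ ρ α T := by
  have := psi_mono hκ hρ α hT
  rwa [psi_zero] at this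

/-- Fundamental identity: the trajectory equals the initial state plus the
stoichiometry applied to cumulative fluxes. -/
lemma traj_eq_psi (hρ : N.MassActionTraj κ z ρ) (s : Fin N.nS) {T : ℝ} (hT : 0 ≤ T) :
    ρ T s = z s + ∑ α, N.psi κ ρ α T * N.stoich s α := by
  set h : ℝ → ℝ := fun T => ρ T s - ∑ α, N.psi κ ρ α T * N.stoich s α with hh
  have key : h T = h 0 := by
    apply constant_of_has_deriv_right_zero (f := h) (a := 0) (b := T)
    · apply ContinuousOn.sub
      · exact (traj_coord_contOn hρ s).mono (fun u hu => hu.1)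
      · apply continuousOn_finset_sum
        intro α _
        exact ((psi_cont hρ α).continuousOn.mul continuousOn_const)
    · intro x hx
      have hx0 : (0:ℝ) ≤ x := hx.1
      have h1 : HasDerivWithinAt (fun u => ρ u s) (N.massActionField κ (ρ x) s) (Set.Ici x) x :=
        (traj_coord_deriv hρ s hx0).mono (Set.Ici_subset_Ici.mpr hx0)
      have h2 : HasDerivWithinAt (fun u => ∑ α, N.psi κ ρ α u * N.stoich s α)
          (∑ α, N.rate κ (ρ (max x 0)) α * N.stoich s α) (Set.Ici x) x := by
        apply HasDerivWithinAt.fun_sum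
        intro α _
        exact ((psi_hasDerivAt hρ α x).hasDerivWithinAt).mul_const _
      have h3 := h1.sub h2
      have heq : N.massActionField κ (ρ x) s -
          (∑ α, N.rate κ (ρ (max x 0)) α * N.stoich s α) = 0 := by
        rw [max_eq_left hx0, field_eq, sub_self]
      rw [hh]
      rw [← heq]
      exact h3
    · exact Set.right_mem_Icc.mpr hT
  have key2 : ρ T s - ∑ α, N.psi κ ρ α T * N.stoich s α =
      ρ 0 s - ∑ α, N.psi κ ρ α 0 * N.stoich s α := key
  rw [hρ.1] at key2
  have hz2 : ∑ α, N.psi κ ρ α 0 * N.stoich s α = 0 :=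
    Finset.sum_eq_zero fun α _ => by rw [psi_zero, zero_mul]
  rw [hz2, sub_zero] at key2
  linarith

include hff in
/-- Total fluxes of nonnull reactions are bounded. -/
lemma psi_le (hκ : ∀ α, 0 < κ α) (hρ : N.MassActionTraj κ z ρ) {α : Fin N.nR}
    (hnn : N.nonnul α) {T : ℝ} (hT : 0 ≤ T) :
    N.psi κ ρ α T ≤ N.FSum e ρ N.nS 0 / N.lyapC := by
  set H : ℝ → ℝ := fun t => N.FSum e ρ N.nS t + N.lyapC * N.psi κ ρ α t with hH
  have hanti : H T ≤ H 0 := by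
    apply antitone_of_right_deriv (f' := fun x =>
      (∑ β, N.rate κ (ρ x) β *
        (∑ i ∈ Finset.univ.filter (fun i : Fin N.nS => (i : ℕ) < N.nS),
          N.wt i * N.stoich (e i) β)) + N.lyapC * N.rate κ (ρ (max x 0)) α) hT
    · apply ContinuousOn.add
      · exact (FSum_contOn hρ N.nS).mono (fun u hu => hu.1)
      · exact (continuousOn_const.mul (psi_cont hρ α).continuousOn)
    · intro x hx
      refine HasDerivWithinAt.add ?_ ?_
      · exact (FSum_deriv hρ N.nS hx.1).mono (Set.Ici_subset_Ici.mpr hx.1)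
      · exact ((psi_hasDerivAt hρ α x).hasDerivWithinAt).const_mul _
    · intro x hx
      have hx0 : (0:ℝ) ≤ x := hx.1
      rw [max_eq_left hx0]
      set colsum : Fin N.nR → ℝ := fun β =>
        ∑ i ∈ Finset.univ.filter (fun i : Fin N.nS => (i : ℕ) < N.nS),
          N.wt i * N.stoich (e i) β with hcol
      have hother : ∀ β ∈ Finset.univ.erase α, N.rate κ (ρ x) β * colsum β ≤ 0 := by
        intro β _
        exact mul_nonpos_of_nonneg_of_nonpos
          (N.rate_nonneg hκ (traj_state hρ hx0) β) (N.lyap_key e hff β N.nS).1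
      have hsplit : (∑ β, N.rate κ (ρ x) β * colsum β) ≤ N.rate κ (ρ x) α * colsum α := by
        rw [← Finset.add_sum_erase Finset.univ _ (Finset.mem_univ α)]
        have := Finset.sum_nonpos hother
        linarith
      have hstrict : colsum α ≤ -N.lyapC := by
        apply (N.lyap_key e hff α N.nS).2
        obtain ⟨s, hs⟩ := hnn
        refine ⟨e.symm s, (e.symm s).isLt, ?_⟩
        rwa [Equiv.apply_symm_apply]
      have hrate := N.rate_nonneg hκ (traj_state hρ hx0) α
      calc (∑ β, N.rate κ (ρ x) β * colsum β) + N.lyapC * N.rate κ (ρ x) α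
          ≤ N.rate κ (ρ x) α * colsum α + N.lyapC * N.rate κ (ρ x) α := by linarith
        _ ≤ N.rate κ (ρ x) α * (-N.lyapC) + N.lyapC * N.rate κ (ρ x) α := by
            have := mul_le_mul_of_nonneg_left hstrict hrate
            linarith
        _ = 0 := by ring
  rw [hH] at hanti
  simp only at hanti
  rw [psi_zero, mul_zero, add_zero] at hanti
  have h1 := FSum_nonneg (e := e) hρ N.nS hT
  have h2 := N.lyapC_pos
  rw [le_div_iff₀ h2]
  linarith

include hff in
lemma psi_tendsto_utot (hκ : ∀ α, 0 < κ α) (hρ : N.MassActionTraj κ z ρ) {α : Fin N.nR}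
    (hnn : N.nonnul α) :
    Filter.Tendsto (N.psi κ ρ α) Filter.atTop (nhds (N.utot κ ρ α)) := by
  classical
  have hut : N.utot κ ρ α = ⨆ T : ℝ, N.psi κ ρ α (max T 0) := by
    rw [utot, if_pos hnn]
  set g : ℝ → ℝ := fun T => N.psi κ ρ α (max T 0) with hg
  have hmono : Monotone g := fun a b hab =>
    psi_mono hκ hρ α (max_le_max hab le_rfl)
  have hbdd : BddAbove (Set.range g) := by
    refine ⟨N.FSum e ρ N.nS 0 / N.lyapC, ?_⟩
    rintro y ⟨T, rfl⟩
    exact psi_le hff hκ hρ hnn (le_max_right T 0)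
  have := tendsto_atTop_ciSup hmono hbdd
  rw [← hut] at this
  apply this.congr'
  filter_upwards [Filter.eventually_ge_atTop (0:ℝ)] with t ht
  rw [hg]
  simp [max_eq_left ht]

lemma utot_null {α : Fin N.nR} (h : ¬N.nonnul α) : N.utot κ ρ α = 0 := by
  classical
  rw [utot, if_neg h]

include hff in
lemma utot_nonneg (hκ : ∀ α, 0 < κ α) (hρ : N.MassActionTraj κ z ρ) (α : Fin N.nR) :
    0 ≤ N.utot κ ρ α := by
  classical
  by_cases h : N.nonnul α
  · apply ge_of_tendsto (psi_tendsto_utot hff hκ hρ h)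
    filter_upwards [Filter.eventually_ge_atTop (0:ℝ)] with t ht
    exact psi_nonneg hκ hρ α ht
  · rw [utot_null h]

include hff in
/-- At the limit, the state equals the start plus total fluxes. -/
lemma limit_eq (hκ : ∀ α, 0 < κ α) (hρ : N.MassActionTraj κ z ρ)
    {o : Fin N.nS → ℝ} (ho : Filter.Tendsto ρ Filter.atTop (nhds o)) (s : Fin N.nS) :
    o s = z s + ∑ α, N.utot κ ρ α * N.stoich s α := by
  classical
  have h1 : Filter.Tendsto (fun T => ρ T s) Filter.atTop (nhds (o s)) :=
    tendsto_pi_nhds.mp ho s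
  have h2 : Filter.Tendsto (fun T => z s + ∑ α, N.psi κ ρ α T * N.stoich s α)
      Filter.atTop (nhds (z s + ∑ α, N.utot κ ρ α * N.stoich s α)) := by
    apply Filter.Tendsto.const_add
    apply tendsto_finset_sum
    intro α _
    by_cases h : N.nonnul α
    · exact (psi_tendsto_utot hff hκ hρ h).mul_const _
    · have hst : N.stoich s α = 0 := by
        by_contra hne
        exact h ⟨s, hne⟩
      rw [hst]
      simp only [mul_zero]
      exact tendsto_const_nhds
  have h3 : Filter.Tendsto (fun T => ρ T s) Filter.atTop
      (nhds (z s + ∑ α, N.utot κ ρ α * N.stoich s α)) := by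
    apply h2.congr'
    filter_upwards [Filter.eventually_ge_atTop (0:ℝ)] with T hT
    exact (traj_eq_psi hρ s hT).symm
  exact tendsto_nhds_unique h1 h3

/-- A positive total flux means the reaction was applicable at some time. -/
lemma utot_pos_imp (hκ : ∀ α, 0 < κ α) (hρ : N.MassActionTraj κ z ρ) {α : Fin N.nR}
    (hu : 0 < N.utot κ ρ α) : ∃ t, 0 ≤ t ∧ N.applicable (ρ t) α := by
  classical
  have hnn : N.nonnul α := by
    by_contra h
    rw [utot_null h] at hu
    exact lt_irrefl 0 hu
  rw [utot, if_pos hnn] at hu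
  -- some psi value is positive
  have hex : ∃ T : ℝ, 0 < N.psi κ ρ α (max T 0) := by
    by_contra hcon
    push_neg at hcon
    have : ∀ T : ℝ, N.psi κ ρ α (max T 0) = 0 := fun T =>
      le_antisymm (hcon T) (psi_nonneg hκ hρ α (le_max_right T 0))
    have : (⨆ T : ℝ, N.psi κ ρ α (max T 0)) = 0 := by
      rw [funext this]
      exact ciSup_const
    rw [this] at hu
    exact lt_irrefl 0 hu
  obtain ⟨T, hT⟩ := hex
  set T' := max T 0 with hT'
  have hT'0 : (0:ℝ) ≤ T' := le_max_right T 0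
  -- the integrand must be positive somewhere on [0, T']
  by_contra hcon
  push_neg at hcon
  have hzero : ∀ t ∈ Set.uIcc (0:ℝ) T', N.rate κ (ρ (max t 0)) α = 0 := by
    intro t _
    have hst := traj_state hρ (le_max_right t 0)
    rcases lt_or_eq_of_le (N.rate_nonneg hκ hst α) with h | h
    · exfalso
      exact hcon (max t 0) (le_max_right t 0) ((N.rate_pos_iff hκ hst α).mp h)
    · exact h.symm
  have : N.psi κ ρ α T' = 0 := by
    rw [psi]
    rw [intervalIntegral.integral_congr (g := fun _ => 0) hzero]
    simp
  rw [this] at hT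
  exact lt_irrefl 0 hT

include hff in
/-- At the limit, every nonnull reaction has rate zero. -/
lemma rate_limit_zero (hκ : ∀ α, 0 < κ α) (hρ : N.MassActionTraj κ z ρ)
    {o : Fin N.nS → ℝ} (ho : Filter.Tendsto ρ Filter.atTop (nhds o))
    (hos : N.IsState o) {α : Fin N.nR} (hnn : N.nonnul α) : N.rate κ o α = 0 := by
  by_contra hne
  have hpos : 0 < N.rate κ o α := lt_of_le_of_ne (N.rate_nonneg hκ hos α) (Ne.symm hne)
  set c := N.rate κ o α with hc
  have h1 : Filter.Tendsto (fun T => N.rate κ (ρ T) α) Filter.atTop (nhds c) :=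
    ((N.rate_continuous κ α).tendsto o).comp ho
  have h2 : ∀ᶠ T in Filter.atTop, c / 2 < N.rate κ (ρ T) α :=
    h1.eventually (eventually_gt_nhds (half_lt_self hpos))
  obtain ⟨T0, hT0⟩ := (h2.and (Filter.eventually_ge_atTop (0:ℝ))).exists_forall_of_atTop
  -- linear growth of psi
  have grow : ∀ b, T0 ≤ b → N.psi κ ρ α T0 + (b - T0) * (c / 2) ≤ N.psi κ ρ α b := by
    intro b hb
    have hT00 : (0:ℝ) ≤ T0 := (hT0 T0 le_rfl).2
    have := monotone_of_right_deriv (f := fun t => N.psi κ ρ α t - c / 2 * t)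
      (f' := fun t => N.rate κ (ρ (max t 0)) α - c / 2) hb
      (((psi_cont hρ α).continuousOn).sub (continuousOn_const.mul continuousOn_id))
      (fun x hx => ((psi_hasDerivAt hρ α x).hasDerivWithinAt).sub
        (by simpa using (((hasDerivAt_id x).const_mul (c/2)).hasDerivWithinAt
          (s := Set.Ici x)) :
          HasDerivWithinAt (fun t : ℝ => c / 2 * t) (c / 2) (Set.Ici x) x))
      ?_
    · nlinarith [this]
    · intro x hx
      have hx0 : (0:ℝ) ≤ x := le_trans hT00 hx.1
      show 0 ≤ N.rate κ (ρ (max x 0)) α - c / 2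
      rw [max_eq_left hx0]
      have := (hT0 x hx.1).1
      linarith
  -- contradiction with boundedness
  set M := N.FSum e ρ N.nS 0 / N.lyapC with hM
  have hbound : ∀ b, T0 ≤ b → N.psi κ ρ α b ≤ M :=
    fun b hb => psi_le hff hκ hρ hnn (le_trans (hT0 T0 le_rfl).2 hb)
  set b := T0 + (M + 1 - N.psi κ ρ α T0) * (2 / c) with hb
  have hMpsi : N.psi κ ρ α T0 ≤ M := hbound T0 le_rfl
  have hble : T0 ≤ b := by
    rw [hb]
    have : 0 ≤ (M + 1 - N.psi κ ρ α T0) * (2 / c) := by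
      apply mul_nonneg (by linarith) (by positivity)
    linarith
  have := grow b hble
  have hcalc : N.psi κ ρ α T0 + (b - T0) * (c / 2) = M + 1 := by
    rw [hb]
    have hc0 : c ≠ 0 := ne_of_gt hpos
    field_simp
    ring
  rw [hcalc] at this
  have := hbound b hble
  linarith

end Lyap2


/-! ### Siphon invariance: species outside the producible closure stay at zero -/

section Siphon

variable {κ : Fin N.nR → ℝ} {z : Fin N.nS → ℝ} {ρ : ℝ → Fin N.nS → ℝ}

open Finset in
lemma siphon_field_bound (hκ : ∀ α, 0 < κ α) {c : Fin N.nS → ℝ} (hc : N.IsState c)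
    {Γ : Finset (Fin N.nS)}
    (hcl : ∀ (α : Fin N.nR) (s : Fin N.nS), (∀ s', 0 < N.react α s' → s' ∈ Γ) →
      0 < N.stoich s α → s ∈ Γ) :
    |∑ s ∈ Finset.univ \ Γ, N.massActionField κ c s| ≤
      ((N.nS : ℝ) * N.Qb κ c) * ∑ s ∈ Finset.univ \ Γ, c s := by
  set H := ∑ s ∈ Finset.univ \ Γ, c s with hHdef
  have hH0 : 0 ≤ H := Finset.sum_nonneg fun s _ => hc s
  have hfield : ∀ s ∈ Finset.univ \ Γ, |N.massActionField κ c s| ≤ N.Qb κ c * H := by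
    intro s hs
    have hsΓ : s ∉ Γ := (Finset.mem_sdiff.mp hs).2
    rw [field_eq]
    calc |∑ α, N.rate κ c α * N.stoich s α| ≤ ∑ α, |N.rate κ c α * N.stoich s α| :=
          Finset.abs_sum_le_sum_abs _ _
      _ ≤ ∑ α, κ α * ((N.Bnd : ℝ) + 1) * (∏ s', (c s' + 1) ^ N.react α s') * H := by
          apply Finset.sum_le_sum
          intro α _
          by_cases hst : N.stoich s α = 0
          · rw [hst, mul_zero, abs_zero]
            have : 0 ≤ κ α * ((N.Bnd : ℝ) + 1) * (∏ s', (c s' + 1) ^ N.react α s') := by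
              apply mul_nonneg (mul_nonneg (le_of_lt (hκ α)) (by positivity))
              exact Finset.prod_nonneg fun i _ => pow_nonneg (by linarith [hc i]) _
            exact mul_nonneg this hH0
          · -- find an absent reactant
            have hs'' : ∃ s'', s'' ∉ Γ ∧ 1 ≤ N.react α s'' := by
              rcases lt_or_gt_of_ne hst with hneg | hpos
              · refine ⟨s, hsΓ, ?_⟩
                by_contra hre
                have h0 : N.react α s = 0 := by omega
                rw [stoich, h0] at hneg
                simp at hneg
                linarith [Nat.cast_nonneg (α := ℝ) (N.prods α s)]
              · by_contra hcon
                push_neg at hcon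
                apply hsΓ
                apply hcl α s _ hpos
                intro s' hs'
                by_contra hs'Γ
                have := hcon s' hs'Γ
                omega
            obtain ⟨s'', hs''Γ, hs''r⟩ := hs''
            have hrle : N.rate κ c α ≤ κ α * ((∏ s', (c s' + 1) ^ N.react α s') * H) := by
              rw [rate]
              apply mul_le_mul_of_nonneg_left _ (le_of_lt (hκ α))
              calc (∏ s', c s' ^ N.react α s') ≤ c s'' * ∏ s', (c s' + 1) ^ N.react α s' :=
                    N.prod_pow_le hc hs''r
                _ ≤ H * ∏ s', (c s' + 1) ^ N.react α s' := by
                    apply mul_le_mul_of_nonneg_right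
                    · exact Finset.single_le_sum (f := fun s' => c s')
                        (fun i _ => hc i)
                        (Finset.mem_sdiff.mpr ⟨Finset.mem_univ _, hs''Γ⟩)
                    · exact Finset.prod_nonneg fun i _ => pow_nonneg (by linarith [hc i]) _
                _ = (∏ s', (c s' + 1) ^ N.react α s') * H := mul_comm _ _
            have habs : |N.stoich s α| ≤ (N.Bnd : ℝ) + 1 := by
              have := N.abs_stoich_le s α
              linarith
            rw [abs_mul, abs_of_nonneg (N.rate_nonneg hκ hc α)]
            calc N.rate κ c α * |N.stoich s α|
                ≤ (κ α * ((∏ s', (c s' + 1) ^ N.react α s') * H)) * ((N.Bnd : ℝ) + 1) := by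
                  apply mul_le_mul hrle habs (abs_nonneg _)
                  apply mul_nonneg (le_of_lt (hκ α))
                  apply mul_nonneg _ hH0
                  exact Finset.prod_nonneg fun i _ => pow_nonneg (by linarith [hc i]) _
              _ = κ α * ((N.Bnd : ℝ) + 1) * (∏ s', (c s' + 1) ^ N.react α s') * H := by ring
      _ = N.Qb κ c * H := by rw [Qb, Finset.sum_mul]
  calc |∑ s ∈ Finset.univ \ Γ, N.massActionField κ c s|
      ≤ ∑ s ∈ Finset.univ \ Γ, |N.massActionField κ c s| := Finset.abs_sum_le_sum_abs _ _
    _ ≤ ∑ _s ∈ Finset.univ \ Γ, N.Qb κ c * H := Finset.sum_le_sum hfield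
    _ = ((Finset.univ \ Γ).card : ℝ) * (N.Qb κ c * H) := by
        rw [Finset.sum_const, nsmul_eq_mul]
    _ ≤ (N.nS : ℝ) * (N.Qb κ c * H) := by
        apply mul_le_mul_of_nonneg_right
        · exact_mod_cast le_trans (Finset.card_le_card (Finset.sdiff_subset))
            (le_of_eq (Finset.card_univ.trans (Fintype.card_fin _)))
        · exact mul_nonneg (N.Qb_nonneg hκ hc) hH0
    _ = ((N.nS : ℝ) * N.Qb κ c) * H := by ring

open Finset in
/-- Species outside a closed superset of the initially present species remain zero. -/
lemma siphon_invariance (hκ : ∀ α, 0 < κ α) (hρ : N.MassActionTraj κ z ρ)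
    {Γ : Finset (Fin N.nS)}
    (hz0 : ∀ s, 0 < z s → s ∈ Γ)
    (hcl : ∀ (α : Fin N.nR) (s : Fin N.nS), (∀ s', 0 < N.react α s' → s' ∈ Γ) →
      0 < N.stoich s α → s ∈ Γ)
    {t : ℝ} (ht : 0 ≤ t) : ∀ s ∉ Γ, ρ t s = 0 := by
  set h : ℝ → ℝ := fun u => ∑ s ∈ Finset.univ \ Γ, ρ u s with hhdef
  have hcont : ContinuousOn h (Set.Icc 0 t) := by
    apply continuousOn_finset_sum
    intro s _
    exact (traj_coord_contOn hρ s).mono (fun u hu => hu.1)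
  have hderiv : ∀ x ∈ Set.Ico 0 t, HasDerivWithinAt h
      (∑ s ∈ Finset.univ \ Γ, N.massActionField κ (ρ x) s) (Set.Ici x) x := by
    intro x hx
    apply HasDerivWithinAt.fun_sum
    intro s _
    exact (traj_coord_deriv hρ s hx.1).mono (Set.Ici_subset_Ici.mpr hx.1)
  -- sup of the coefficient on the compact interval
  obtain ⟨x0, hx0m, hx0max⟩ := isCompact_Icc.exists_isMaxOn (Set.nonempty_Icc.mpr ht)
    (((continuous_const.mul ((N.Qb_continuous κ).comp (traj_cont_max hρ)))).continuousOn :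
      ContinuousOn (fun u => (N.nS : ℝ) * N.Qb κ (ρ (max u 0))) (Set.Icc 0 t))
  set K := (N.nS : ℝ) * N.Qb κ (ρ (max x0 0)) with hKdef
  have hzero : ‖h 0‖ ≤ 0 := by
    have : h 0 = 0 := by
      rw [hhdef]
      apply Finset.sum_eq_zero
      intro s hs
      have hsΓ := (Finset.mem_sdiff.mp hs).2
      rw [hρ.1]
      rcases lt_or_eq_of_le ((hρ.1 ▸ traj_state hρ le_rfl) s) with hp | hp
      · exact absurd (hz0 s hp) hsΓ
      · exact hp.symm
    rw [this, norm_zero]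
  have hbound : ∀ x ∈ Set.Ico 0 t,
      ‖∑ s ∈ Finset.univ \ Γ, N.massActionField κ (ρ x) s‖ ≤ K * ‖h x‖ + 0 := by
    intro x hx
    rw [add_zero]
    have hx0 : (0:ℝ) ≤ x := hx.1
    have hstate := traj_state hρ hx0
    have h1 := N.siphon_field_bound hκ hstate hcl (Γ := Γ)
    have h2 : (N.nS : ℝ) * N.Qb κ (ρ x) ≤ K := by
      have := hx0max (Set.mem_Icc.mpr ⟨hx.1, le_of_lt hx.2⟩)
      simpa [max_eq_left hx0] using this
    have hhx : 0 ≤ h x := Finset.sum_nonneg fun s _ => hstate s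
    rw [Real.norm_eq_abs, Real.norm_eq_abs, abs_of_nonneg hhx]
    calc |∑ s ∈ Finset.univ \ Γ, N.massActionField κ (ρ x) s|
        ≤ ((N.nS : ℝ) * N.Qb κ (ρ x)) * h x := h1
      _ ≤ K * h x := mul_le_mul_of_nonneg_right h2 hhx
  have := norm_le_gronwallBound_of_norm_deriv_right_le hcont hderiv hzero hbound t
    (Set.right_mem_Icc.mpr ht)
  rw [gronwallBound_ε0, zero_mul] at this
  have hht : h t = 0 := by
    have hnn : 0 ≤ h t := Finset.sum_nonneg fun s _ => traj_state hρ ht s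
    rw [Real.norm_eq_abs, abs_of_nonneg hnn] at this
    linarith
  intro s hsΓ
  have := (Finset.sum_eq_zero_iff_of_nonneg (fun i _ => traj_state hρ ht i)).mp hht s
    (Finset.mem_sdiff.mpr ⟨Finset.mem_univ _, hsΓ⟩)
  exact this

end Siphon


/-! ### The producibility closure -/

open scoped Classical in
/-- One step of the producibility closure. -/
noncomputable def stepCl (N : CRN) (Γ : Finset (Fin N.nS)) : Finset (Fin N.nS) :=
  Γ ∪ Finset.univ.filter
    (fun s => ∃ α, (∀ s', 0 < N.react α s' → s' ∈ Γ) ∧ 0 < N.stoich s α)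

/-- The producibility closure of the species present in `z`. -/
noncomputable def closure (N : CRN) (z : Fin N.nS → ℝ) : Finset (Fin N.nS) :=
  N.stepCl^[N.nS] (Finset.univ.filter (fun s => 0 < z s))

lemma subset_stepCl (Γ : Finset (Fin N.nS)) : Γ ⊆ N.stepCl Γ :=
  Finset.subset_union_left

lemma stepCl_mono {Γ Γ' : Finset (Fin N.nS)} (h : Γ ⊆ Γ') : N.stepCl Γ ⊆ N.stepCl Γ' := by
  classical
  intro s hs
  rw [stepCl, Finset.mem_union] at hs ⊢
  rcases hs with hs | hs
  · exact Or.inl (h hs)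
  · right
    rw [Finset.mem_filter] at hs ⊢
    obtain ⟨-, α, hα, hst⟩ := hs
    exact ⟨Finset.mem_univ _, α, fun s' hs' => h (hα s' hs'), hst⟩

lemma mem_stepCl_of_produced {Γ : Finset (Fin N.nS)} {s : Fin N.nS} {α : Fin N.nR}
    (hα : ∀ s', 0 < N.react α s' → s' ∈ Γ) (hst : 0 < N.stoich s α) :
    s ∈ N.stepCl Γ := by
  classical
  rw [stepCl, Finset.mem_union, Finset.mem_filter]
  exact Or.inr ⟨Finset.mem_univ _, α, hα, hst⟩

lemma stepCl_closure_eq (z : Fin N.nS → ℝ) : N.stepCl (N.closure z) = N.closure z := by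
  classical
  set Γ0 := Finset.univ.filter (fun s => 0 < z s) with hΓ0
  set iter : ℕ → Finset (Fin N.nS) := fun j => N.stepCl^[j] Γ0 with hiter
  have hiter_succ : ∀ j, iter (j + 1) = N.stepCl (iter j) := by
    intro j
    rw [hiter]
    simp [Function.iterate_succ_apply']
  have key : ∃ j, j ≤ N.nS ∧ N.stepCl (iter j) = iter j := by
    by_contra hcon
    push_neg at hcon
    have hcard : ∀ j, j ≤ N.nS + 1 → j ≤ (iter j).card := by
      intro j
      induction j with
      | zero => intro _; exact Nat.zero_le _
      | succ j ih =>
        intro hj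
        have hlt : iter j ⊂ iter (j + 1) := by
          rw [hiter_succ]
          exact Finset.ssubset_iff_subset_ne.mpr
            ⟨N.subset_stepCl _, fun h => hcon j (by omega) h.symm⟩
        have := Finset.card_lt_card hlt
        have := ih (by omega)
        omega
    have h1 := hcard (N.nS + 1) le_rfl
    have h2 : (iter (N.nS + 1)).card ≤ N.nS := by
      calc (iter (N.nS + 1)).card ≤ (Finset.univ : Finset (Fin N.nS)).card :=
          Finset.card_le_card (Finset.subset_univ _)
        _ = N.nS := Finset.card_univ.trans (Fintype.card_fin _)
    omega
  obtain ⟨j, hj, hfix⟩ := key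
  have stable : ∀ k, j ≤ k → iter k = iter j := by
    intro k
    induction k with
    | zero => intro h; rw [Nat.le_zero.mp h]
    | succ k ih =>
      intro h
      rcases Nat.lt_or_ge j (k + 1) with h' | h'
      · have hjk : j ≤ k := by omega
        rw [hiter_succ, ih hjk, hfix]
      · have : j = k + 1 := by omega
        rw [this]
  have hclo : N.closure z = iter j := stable N.nS hj
  rw [hclo, ← hiter_succ, stable (j + 1) (by omega)]

lemma closure_closed {z : Fin N.nS → ℝ} {s : Fin N.nS} {α : Fin N.nR}
    (hα : ∀ s', 0 < N.react α s' → s' ∈ N.closure z) (hst : 0 < N.stoich s α) :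
    s ∈ N.closure z := by
  rw [← N.stepCl_closure_eq z]
  exact N.mem_stepCl_of_produced hα hst

lemma iter_subset_closure (z : Fin N.nS → ℝ) (j : ℕ) :
    N.stepCl^[j] (Finset.univ.filter (fun s => 0 < z s)) ⊆ N.closure z := by
  classical
  induction j with
  | zero =>
    -- Γ0 ⊆ iter j for all j by induction
    have : ∀ k, N.stepCl^[k] (Finset.univ.filter (fun s => 0 < z s)) ⊆
        N.stepCl^[k+1] (Finset.univ.filter (fun s => 0 < z s)) := by
      intro k
      rw [Function.iterate_succ_apply']
      exact N.subset_stepCl _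
    have mono : ∀ k, (Finset.univ.filter (fun s => 0 < z s)) ⊆
        N.stepCl^[k] (Finset.univ.filter (fun s => 0 < z s)) := by
      intro k
      induction k with
      | zero => exact fun x hx => hx
      | succ k ih => exact fun x hx => this k (ih hx)
    exact mono N.nS
  | succ j ih =>
    rw [Function.iterate_succ_apply']
    calc N.stepCl (N.stepCl^[j] (Finset.univ.filter (fun s => 0 < z s)))
        ⊆ N.stepCl (N.closure z) := N.stepCl_mono ih
      _ = N.closure z := N.stepCl_closure_eq z

lemma mem_closure_of_pos {z : Fin N.nS → ℝ} {s : Fin N.nS} (h : 0 < z s) :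
    s ∈ N.closure z := by
  classical
  apply N.iter_subset_closure z 0
  simpa using h


section EventualPos

variable {κ : Fin N.nR → ℝ} {z : Fin N.nS → ℝ} {ρ : ℝ → Fin N.nS → ℝ}

/-- Every species in the closure is eventually (uniformly) present. -/
lemma closure_eventually_pos (hκ : ∀ α, 0 < κ α) (hρ : N.MassActionTraj κ z ρ) :
    ∃ T, 0 ≤ T ∧ ∀ s ∈ N.closure z, ∀ t, T ≤ t → 0 < ρ t s := by
  classical
  set Γ0 := Finset.univ.filter (fun s => 0 < z s) with hΓ0
  suffices H : ∀ j : ℕ, ∃ T, 0 ≤ T ∧ ∀ s ∈ N.stepCl^[j] Γ0, ∀ t, T ≤ t → 0 < ρ t s by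
    exact H N.nS
  intro j
  induction j with
  | zero =>
    refine ⟨0, le_rfl, ?_⟩
    intro s hs t ht
    simp only [Function.iterate_zero, id_eq, hΓ0, Finset.mem_filter] at hs
    have hz : 0 < ρ 0 s := by rw [hρ.1]; exact hs.2
    exact traj_persist hκ hρ s le_rfl ht hz
  | succ j ih =>
    obtain ⟨T, hT0, hT⟩ := ih
    -- for each species, find a time after which it is positive
    have hper : ∀ s : Fin N.nS, ∃ Ts, T ≤ Ts ∧
        (s ∈ N.stepCl^[j+1] Γ0 → ∀ t, Ts ≤ t → 0 < ρ t s) := by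
      intro s
      by_cases hs : s ∈ N.stepCl^[j+1] Γ0
      · rw [Function.iterate_succ_apply'] at hs
        rw [stepCl, Finset.mem_union] at hs
        rcases hs with hs | hs
        · exact ⟨T, le_rfl, fun _ t ht => hT s hs t ht⟩
        · rw [Finset.mem_filter] at hs
          obtain ⟨-, α, hα, hst⟩ := hs
          have happ : ∀ t, T ≤ t → N.applicable (ρ t) α := by
            intro t ht s' hs'
            exact hT s' (hα s' hs') t ht
          obtain ⟨t1, ht1, hpos⟩ := traj_becomes_pos hκ hρ hT0 hst happ
          refine ⟨t1, ht1, fun _ t ht => ?_⟩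
          exact traj_persist hκ hρ s (le_trans hT0 ht1) ht hpos
      · exact ⟨T, le_rfl, fun h => absurd h hs⟩
    choose Ts hTs1 hTs2 using hper
    -- uniform time via the sum trick
    refine ⟨T + ∑ s, (Ts s - T), ?_, ?_⟩
    · have : 0 ≤ ∑ s, (Ts s - T) := Finset.sum_nonneg fun s _ => by
        simp only [sub_nonneg]
        exact hTs1 s
      linarith
    · intro s hs t ht
      apply hTs2 s hs t
      have h1 : Ts s - T ≤ ∑ s', (Ts s' - T) :=
        Finset.single_le_sum (f := fun s' => Ts s' - T)
          (fun i _ => by simp only [sub_nonneg]; exact hTs1 i) (Finset.mem_univ s)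
      linarith

end EventualPos


lemma exists_pos_le {n : ℕ} (g : Fin n → ℝ) (hg : ∀ i, 0 < g i) :
    ∃ δ, 0 < δ ∧ ∀ i, δ ≤ g i := by
  classical
  rcases Nat.eq_zero_or_pos n with h | h
  · subst h
    exact ⟨1, one_pos, fun i => i.elim0⟩
  · have hne : Nonempty (Fin n) := ⟨⟨0, h⟩⟩
    obtain ⟨i0, -, hmin⟩ := Finset.exists_min_image Finset.univ g
      ⟨Classical.arbitrary _, Finset.mem_univ _⟩
    exact ⟨g i0, hg i0, fun i => hmin i (Finset.mem_univ i)⟩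

section Chain

variable {z o : Fin N.nS → ℝ}

open Finset in
/-- The chain construction: if the target can be written as the start plus
nonnegative fluxes supported on reactions whose reactants lie in the closure,
then the target is segment-reachable. -/
lemma chain_reach (hz_state : N.IsState z) (ho_state : N.IsState o)
    (r0 : Fin N.nR → ℝ)
    (hr0 : ∀ α, 0 ≤ r0 α)
    (hr0A : ∀ α, 0 < r0 α →
      (N.nonnul α ∧ ∀ s', 0 < N.react α s' → s' ∈ N.closure z))
    (hAr0 : ∀ α, (N.nonnul α ∧ ∀ s', 0 < N.react α s' → s' ∈ N.closure z) → 0 < r0 α)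
    (heq : ∀ s, o s = z s + ∑ α, r0 α * N.stoich s α) :
    N.segReach z o := by
  classical
  set Γ0 := Finset.univ.filter (fun s => 0 < z s) with hΓ0
  set iter : ℕ → Finset (Fin N.nS) := fun j => N.stepCl^[j] Γ0 with hiter
  set A : Fin N.nR → Prop :=
    fun α => N.nonnul α ∧ ∀ s', 0 < N.react α s' → s' ∈ N.closure z with hA
  have hiter_succ : ∀ j, iter (j + 1) = N.stepCl (iter j) := by
    intro j
    rw [hiter]
    simp [Function.iterate_succ_apply']
  have hiter_sub : ∀ j, iter j ⊆ N.closure z := fun j => N.iter_subset_closure z j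
  have inv : ∀ j : ℕ, ∃ (c : Fin N.nS → ℝ) (r : Fin N.nR → ℝ),
      Relation.ReflTransGen N.slReach z c ∧ N.IsState c ∧
      (∀ s, 0 < c s ↔ s ∈ iter j) ∧ (∀ α, 0 ≤ r α) ∧
      (∀ α, A α → 0 < r α) ∧ (∀ α, 0 < r α → A α) ∧
      (∀ s, o s = c s + ∑ α, r α * N.stoich s α) := by
    intro j
    induction j with
    | zero =>
      refine ⟨z, r0, Relation.ReflTransGen.refl, hz_state, ?_, hr0, hAr0, hr0A, heq⟩
      intro s
      rw [hiter]
      simp [hΓ0]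
    | succ j ih =>
      obtain ⟨c, r, hRTG, hcs, hpres, hrnn, hAr, hrA, heqc⟩ := ih
      set Aj : Finset (Fin N.nR) :=
        Finset.univ.filter (fun α => A α ∧ ∀ s', 0 < N.react α s' → s' ∈ iter j) with hAj
      have hAjmem : ∀ α ∈ Aj, A α ∧ ∀ s', 0 < N.react α s' → s' ∈ iter j := by
        intro α hα
        rw [hAj, Finset.mem_filter] at hα
        exact hα.2
      -- choose the firing amount δ
      obtain ⟨δ1, hδ1pos, hδ1le⟩ := exists_pos_le
        (g := fun α : Fin N.nR => if α ∈ Aj then r α / 2 else 1)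
        (by
          intro α
          split_ifs with h
          · have := hAr α (hAjmem α h).1
            linarith
          · exact one_pos)
      set W : Fin N.nS → ℝ := fun s => ∑ α, |N.stoich s α| with hW
      have hWnn : ∀ s, 0 ≤ W s := fun s => Finset.sum_nonneg fun α _ => abs_nonneg _
      obtain ⟨δ2, hδ2pos, hδ2le⟩ := exists_pos_le
        (g := fun s : Fin N.nS => if 0 < c s then c s / (W s + 1) else 1)
        (by
          intro s
          split_ifs with h
          · exact div_pos h (by linarith [hWnn s])
          · exact one_pos)
      set δ := min δ1 δ2 with hδ
      have hδpos : 0 < δ := lt_min hδ1pos hδ2pos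
      have hδr : ∀ α ∈ Aj, δ ≤ r α / 2 := by
        intro α hα
        have := hδ1le α
        rw [if_pos hα] at this
        exact le_trans (min_le_left _ _) this
      have hδc : ∀ s, 0 < c s → δ ≤ c s / (W s + 1) := by
        intro s hs
        have := hδ2le s
        rw [if_pos hs] at this
        exact le_trans (min_le_right _ _) this
      set v : Fin N.nR → ℝ := fun α => if α ∈ Aj then δ else 0 with hv
      set c' : Fin N.nS → ℝ := fun s => c s + ∑ α, v α * N.stoich s α with hc'
      set r' : Fin N.nR → ℝ := fun α => r α - v α with hr'
      have hvnn : ∀ α, 0 ≤ v α := by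
        intro α
        rw [hv]
        simp only
        split_ifs
        · exact le_of_lt hδpos
        · exact le_rfl
      have hsum : ∀ s, (∑ α, v α * N.stoich s α) = ∑ α ∈ Aj, δ * N.stoich s α := by
        intro s
        rw [hAj, Finset.sum_filter]
        apply Finset.sum_congr rfl
        intro α _
        have hmem : α ∈ Aj ↔ (A α ∧ ∀ s', 0 < N.react α s' → s' ∈ iter j) := by
          rw [hAj]
          simp
        rw [hv]
        simp only
        by_cases hP : A α ∧ ∀ s', 0 < N.react α s' → s' ∈ iter j
        · rw [if_pos (hmem.mpr hP), if_pos hP]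
        · rw [if_neg (fun h => hP (hmem.mp h)), if_neg hP, zero_mul]
      -- reactions in Aj do not consume species outside iter j
      have hnc : ∀ α ∈ Aj, ∀ s, s ∉ iter j → 0 ≤ N.stoich s α := by
        intro α hα s hs
        by_contra hneg
        push_neg at hneg
        have hre : 0 < N.react α s := by
          by_contra hre
          have h0 : N.react α s = 0 := by omega
          rw [stoich, h0] at hneg
          simp at hneg
          linarith [Nat.cast_nonneg (α := ℝ) (N.prods α s), hneg]
        exact hs ((hAjmem α hα).2 s hre)
      -- presence trichotomy for c'
      have htri : ∀ s, (s ∈ iter (j+1) → 0 < c' s) ∧ (s ∉ iter (j+1) → c' s = 0) := by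
        intro s
        by_cases hold : s ∈ iter j
        · -- old species: stays positive
          have hmem : s ∈ iter (j + 1) := by
            rw [hiter_succ]
            exact N.subset_stepCl _ hold
          have hcs' : 0 < c s := (hpres s).mpr hold
          have hpos : 0 < c' s := by
            have hbound : |∑ α ∈ Aj, δ * N.stoich s α| ≤ δ * W s := by
              calc |∑ α ∈ Aj, δ * N.stoich s α| ≤ ∑ α ∈ Aj, |δ * N.stoich s α| :=
                    Finset.abs_sum_le_sum_abs _ _
                _ = ∑ α ∈ Aj, δ * |N.stoich s α| := by
                    apply Finset.sum_congr rfl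
                    intro α _
                    rw [abs_mul, abs_of_pos hδpos]
                _ ≤ ∑ α, δ * |N.stoich s α| := by
                    apply Finset.sum_le_sum_of_subset_of_nonneg (Finset.subset_univ _)
                    intro α _ _
                    exact mul_nonneg (le_of_lt hδpos) (abs_nonneg _)
                _ = δ * W s := by rw [hW, Finset.mul_sum]
            have hδW : δ * (W s + 1) ≤ c s := by
              have h1 := hδc s hcs'
              rw [le_div_iff₀ (by linarith [hWnn s])] at h1
              exact h1
            rw [hc']
            simp only
            rw [hsum s]
            have := abs_le.mp hbound
            nlinarith [hδpos]
          exact ⟨fun _ => hpos, fun hs => absurd hmem hs⟩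
        · have hs0 : c s = 0 := by
            rcases lt_or_eq_of_le (hcs s) with h' | h'
            · exact absurd ((hpres s).mp h') hold
            · exact h'.symm
          have hterm : ∀ α ∈ Aj, 0 ≤ N.stoich s α := fun α hα => hnc α hα s hold
          constructor
          · intro hs
            rw [hiter_succ, stepCl, Finset.mem_union] at hs
            rcases hs with hs | hs
            · exact absurd hs hold
            · rw [Finset.mem_filter] at hs
              obtain ⟨-, α0, hα0r, hα0st⟩ := hs
              have hα0Aj : α0 ∈ Aj := by
                rw [hAj, Finset.mem_filter]
                refine ⟨Finset.mem_univ _, ⟨⟨s, ne_of_gt hα0st⟩, ?_⟩, hα0r⟩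
                intro s' hs'
                exact hiter_sub j (hα0r s' hs')
              rw [hc']
              simp only
              rw [hsum s, hs0, zero_add]
              have h1 : δ * N.stoich s α0 ≤ ∑ α ∈ Aj, δ * N.stoich s α :=
                Finset.single_le_sum
                  (fun α hα => mul_nonneg (le_of_lt hδpos) (hterm α hα)) hα0Aj
              have h2 : 0 < δ * N.stoich s α0 := mul_pos hδpos hα0st
              linarith
          · intro hs
            have hzero : ∀ α ∈ Aj, δ * N.stoich s α = 0 := by
              intro α hα
              rcases lt_or_eq_of_le (hterm α hα) with h' | h'
              · exfalso
                apply hs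
                rw [hiter_succ]
                exact N.mem_stepCl_of_produced (hAjmem α hα).2 h'
              · rw [← h', mul_zero]
            rw [hc']
            simp only
            rw [hsum s, hs0, Finset.sum_eq_zero hzero, add_zero]
      have hc'state : N.IsState c' := by
        intro s
        by_cases h : s ∈ iter (j+1)
        · exact le_of_lt ((htri s).1 h)
        · rw [(htri s).2 h]
      have hsl : N.slReach c c' := by
        refine ⟨hcs, hc'state, v, hvnn, ?_, fun s => rfl⟩
        intro α hα s' hs'
        have hαAj : α ∈ Aj := by
          by_contra h
          rw [hv] at hα
          simp only at hα
          rw [if_neg h] at hα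
          exact lt_irrefl 0 hα
        exact (hpres s').mpr ((hAjmem α hαAj).2 s' hs')
      refine ⟨c', r', hRTG.tail hsl, hc'state, ?_, ?_, ?_, ?_, ?_⟩
      · intro s
        constructor
        · intro h
          by_contra hn
          rw [(htri s).2 hn] at h
          exact lt_irrefl 0 h
        · exact (htri s).1
      · intro α
        rw [hr', hv]
        simp only
        split_ifs with h
        · have := hδr α h
          have := hAr α (hAjmem α h).1
          linarith
        · rw [sub_zero]
          exact hrnn α
      · intro α hAα
        rw [hr', hv]
        simp only
        split_ifs with h
        · have h1 := hδr α h
          have h2 := hAr α hAα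
          linarith
        · rw [sub_zero]
          exact hAr α hAα
      · intro α hα
        apply hrA
        have := hvnn α
        rw [hr'] at hα
        simp only at hα
        linarith
      · intro s
        rw [heqc s, hc']
        simp only
        have : (∑ α, r α * N.stoich s α) =
            (∑ α, v α * N.stoich s α) + ∑ α, r' α * N.stoich s α := by
          rw [← Finset.sum_add_distrib]
          apply Finset.sum_congr rfl
          intro α _
          rw [hr']
          ring
        rw [this]
        ring
  obtain ⟨c, r, hRTG, hcs2, hpres, hrnn, hAr, hrA, heqc⟩ := inv N.nS
  have hfin : N.slReach c o := by
    refine ⟨hcs2, ho_state, r, hrnn, ?_, heqc⟩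
    intro α hα s' hs'
    apply (hpres s').mpr
    exact (hrA α hα).2 s' hs'
  exact (segReach_iff_reflTransGen).mpr (hRTG.tail hfin)

end Chain

end CRN

/-- For a feedforward CRC stably computing `f`, from any state `z` reachable
from an input state `x`, every mass-action trajectory starting at `z`
converges to an output stable state whose output concentration is `f(x)`. -/
theorem massAction_converges_of_feedforward_stablyComputes
    {k : ℕ} (C : CRC k) (hff : C.toCRN.Feedforward)
    (f : (Fin k → ℝ) → ℝ) (hcomp : C.stablyComputes f)
    (x : Fin k → ℝ) (hx : ∀ i, 0 ≤ x i)
    (z : Fin C.nS → ℝ) (hz : C.toCRN.segReach (C.inputState x) z)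
    (κ : Fin C.nR → ℝ) (hκ : ∀ α, 0 < κ α)
    (ρ : ℝ → Fin C.nS → ℝ) (hρ : C.toCRN.MassActionTraj κ z ρ) :
    ∃ o : Fin C.nS → ℝ, Filter.Tendsto ρ Filter.atTop (nhds o) ∧
      C.outputStable o ∧ o C.out = f x := by
  classical
  obtain ⟨e, hffe⟩ := hff
  obtain ⟨o, ho, hos⟩ := CRN.traj_tendsto_limit hffe hκ hρ
  -- the limit is static
  have hstatic : C.toCRN.staticAt o := by
    intro α hnn
    have hrate := CRN.rate_limit_zero hffe hκ hρ ho hos hnn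
    have hprod : (∏ s', o s' ^ C.toCRN.react α s') = 0 := by
      rcases mul_eq_zero.mp hrate with h | h
      · exact absurd h (ne_of_gt (hκ α))
      · exact h
    obtain ⟨s, -, hs⟩ := Finset.prod_eq_zero_iff.mp hprod
    obtain ⟨hOs, hre⟩ := pow_eq_zero_iff'.mp hs
    exact ⟨s, Nat.pos_of_ne_zero hre, hOs⟩
  have hstable : C.outputStable o := by
    intro o' hseg
    rw [CRN.segReach_eq_of_static hstatic hseg]
  refine ⟨o, ho, hstable, ?_⟩
  -- reachability of the limit
  have hzstate : C.toCRN.IsState z := by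
    have := hρ.2.1 0 Set.self_mem_Ici
    rwa [hρ.1] at this
  have hz0 : ∀ s, 0 < z s → s ∈ C.toCRN.closure z := fun s hzs =>
    C.toCRN.mem_closure_of_pos hzs
  have hcl : ∀ (α : Fin C.nR) (s : Fin C.nS),
      (∀ s', 0 < C.toCRN.react α s' → s' ∈ C.toCRN.closure z) →
      0 < C.toCRN.stoich s α → s ∈ C.toCRN.closure z :=
    fun α s h hst => C.toCRN.closure_closed h hst
  have hreachzo : C.toCRN.segReach z o := by
    apply CRN.chain_reach hzstate hos (C.toCRN.utot κ ρ)
    · exact fun α => CRN.utot_nonneg hffe hκ hρ α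
    · intro α hu
      constructor
      · by_contra h
        rw [CRN.utot_null h] at hu
        exact lt_irrefl 0 hu
      · intro s' hs'
        obtain ⟨t, ht0, happ⟩ := CRN.utot_pos_imp hκ hρ hu
        by_contra hnotin
        have hzero := CRN.siphon_invariance hκ hρ hz0 hcl ht0 s' hnotin
        have hpos := happ s' hs'
        rw [hzero] at hpos
        exact lt_irrefl 0 hpos
    · rintro α ⟨hnn, hsub⟩
      obtain ⟨T, hT0, hT⟩ := CRN.closure_eventually_pos hκ hρ
      have happ : ∀ t, T ≤ t → C.toCRN.applicable (ρ t) α := fun t ht s' hs' =>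
        hT s' (hsub s' hs') t ht
      have hintegrable : ∀ a b : ℝ, IntervalIntegrable
          (fun t => C.toCRN.rate κ (ρ (max t 0)) α) MeasureTheory.volume a b :=
        fun a b => (CRN.psi_integrand_cont hρ α).intervalIntegrable _ _
      have hint : 0 < ∫ t in T..(T+1), C.toCRN.rate κ (ρ (max t 0)) α := by
        apply intervalIntegral.intervalIntegral_pos_of_pos_on (hintegrable T (T+1))
        · intro t ht
          have ht' : T ≤ t := le_of_lt ht.1
          rw [max_eq_left (le_trans hT0 ht')]
          exact (CRN.rate_pos_iff hκ (CRN.traj_state hρ (le_trans hT0 ht')) α).mpr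
            (happ t ht')
        · linarith
      have hsplit : C.toCRN.psi κ ρ α T + (∫ t in T..(T+1),
          C.toCRN.rate κ (ρ (max t 0)) α) = C.toCRN.psi κ ρ α (T+1) :=
        intervalIntegral.integral_add_adjacent_intervals (hintegrable 0 T) (hintegrable T (T+1))
      have hpsiT : 0 ≤ C.toCRN.psi κ ρ α T := CRN.psi_nonneg hκ hρ α hT0
      have hpsi : 0 < C.toCRN.psi κ ρ α (T+1) := by linarith
      have hle : C.toCRN.psi κ ρ α (T+1) ≤ C.toCRN.utot κ ρ α := by
        apply ge_of_tendsto (CRN.psi_tendsto_utot hffe hκ hρ hnn)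
        filter_upwards [Filter.eventually_ge_atTop (T+1)] with t ht
        exact CRN.psi_mono hκ hρ α ht
      linarith
    · exact fun s => CRN.limit_eq hffe hκ hρ ho s
  have hreach_input_o : C.toCRN.segReach (C.inputState x) o :=
    CRN.segReach_trans hz hreachzo
  obtain ⟨o', hoo', -, hval⟩ := hcomp x hx o hreach_input_o
  have heq' : o' = o := CRN.segReach_eq_of_static hstatic hoo'
  rw [← hval, heq']
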